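/- arXiv:2405.11418 — 3 statements merged into one kernel-verified Lean document; each statement's English description precedes it below -/
import Mathlib

section
/- First downward validity for CCSR_AB: let γ be an elementary disjunction, PI a finite index set, and for each j ∈ PI let A_j, B_j be coalitions and φ_j, ψ_j ∈ Φ_CCSR_AB, and let SD = γ ∨ ⋁_{j∈PI} ⟨A_j⟩φ_j⟨B_j⟩_c ψ_j. If ⊨ SD, then either (a) ⊨ γ, or (b) for every PI* ⊆ PI with PI^f ⊆ PI* ⊆ PI^fs, one of the following holds: (1) ⊨ ⋁_{j∈PI*}(φ_j∧ψ_j); (2) there is j' ∈ PI − PI* such that ⊨ ⋁_{j∈PI*}(φ_j∧ψ_j) ∨ (φ_{j'}∧ψ_{j'}); (3) there is j' ∈ PI − PI* such that ⊨ ⋁_{j∈PI*}(φ_j∧ψ_j) ∨ φ_{j'} and A_{j'} ∪ B_{j'} = AG (where the empty disjunction is ⊥). -/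
open scoped Classical

/-- Graph-inclusion between joint actions (represented as partial functions). -/
def subJA {Agt Act : Type} (σ σ' : Agt → Option Act) : Prop :=
  ∀ a x, σ a = some x → σ' a = some x

/-- Restriction of a joint action to a coalition. -/
noncomputable def restrictJA {Agt Act : Type} (σ : Agt → Option Act) (B : Set Agt) :
    Agt → Option Act :=
  fun a => if a ∈ B then σ a else none

/-- σ_A ⊎ σ_B : keep σ_A on A and σ_B on B − A. -/
noncomputable def uplusJA {Agt Act : Type} (A B : Set Agt) (σA σB : Agt → Option Act) :
    Agt → Option Act :=
  fun a => if a ∈ A then σA a else if a ∈ B then σB a else none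

/-- Concurrent game models over agents `Agt` and atomic propositions `AP`.
A joint action of a coalition `A` is represented as a function `Agt → Option Act`
whose domain (the set of agents where it is `some`) is exactly `A`. -/
structure CGM (Agt AP : Type) where
  St : Type
  Act : Type
  st_ne : Nonempty St
  act_ne : Nonempty Act
  aja : St → Set Agt → Set (Agt → Option Act)
  out : St → (Agt → Option Act) → Set St
  lab : St → Set AP
  aja_ne : ∀ s A, (aja s A).Nonempty
  aja_dom : ∀ s A, ∀ σ ∈ aja s A, ∀ a, (σ a).isSome ↔ a ∈ A
  aja_glue : ∀ s A (σ : Agt → Option Act), A.Nonempty →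
      (∀ a, (σ a).isSome ↔ a ∈ A) →
      (σ ∈ aja s A ↔ ∀ a ∈ A, restrictJA σ {a} ∈ aja s {a})
  out_univ : ∀ s, ∀ σ ∈ aja s Set.univ, ∃ t, out s σ = {t}
  out_univ_not : ∀ s (σ : Agt → Option Act), (∀ a, (σ a).isSome) →
      σ ∉ aja s Set.univ → out s σ = ∅
  out_glue : ∀ s A, A ≠ Set.univ → ∀ σ ∈ aja s A,
      out s σ = {t | ∃ σ' ∈ aja s Set.univ, subJA σ σ' ∧ t ∈ out s σ'}
  out_not : ∀ s A (σ : Agt → Option Act), (∀ a, (σ a).isSome ↔ a ∈ A) →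
      A ≠ Set.univ → σ ∉ aja s A → out s σ = ∅

/-- The ability fragment Φ_CCSR_AB. -/
inductive FormCAB (Agt AP : Type) : Type
  | top : FormCAB Agt AP
  | bot : FormCAB Agt AP
  | atom : AP → FormCAB Agt AP
  | natom : AP → FormCAB Agt AP
  | and : FormCAB Agt AP → FormCAB Agt AP → FormCAB Agt AP
  | or : FormCAB Agt AP → FormCAB Agt AP → FormCAB Agt AP
  | cdia : Set Agt → Set Agt → FormCAB Agt AP → FormCAB Agt AP → FormCAB Agt AP

/-- Satisfaction for Φ_CCSR_AB. -/
def satCAB {Agt AP : Type} (M : CGM Agt AP) : M.St → FormCAB Agt AP → Prop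
  | _, FormCAB.top => True
  | _, FormCAB.bot => False
  | s, FormCAB.atom p => p ∈ M.lab s
  | s, FormCAB.natom p => p ∉ M.lab s
  | s, FormCAB.and φ ψ => satCAB M s φ ∧ satCAB M s ψ
  | s, FormCAB.or φ ψ => satCAB M s φ ∨ satCAB M s ψ
  | s, FormCAB.cdia A B φ ψ =>
      ∃ σA ∈ M.aja s A, (∀ t ∈ M.out s σA, satCAB M t φ) ∧
        ∃ σB ∈ M.aja s B, ∀ t ∈ M.out s (uplusJA A B σA σB), satCAB M t ψ

/-- Validity for Φ_CCSR_AB. -/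
def validCAB {Agt AP : Type} (φ : FormCAB Agt AP) : Prop :=
  ∀ (M : CGM Agt AP) (s : M.St), satCAB M s φ

/-- Propositional evaluation, treating modal formulas as atoms (valuation `w`). -/
def evalCAB {Agt AP : Type} (v : AP → Prop) (w : FormCAB Agt AP → Prop) :
    FormCAB Agt AP → Prop
  | FormCAB.top => True
  | FormCAB.bot => False
  | FormCAB.atom p => v p
  | FormCAB.natom p => ¬ v p
  | FormCAB.and φ ψ => evalCAB v w φ ∧ evalCAB v w ψ
  | FormCAB.or φ ψ => evalCAB v w φ ∨ evalCAB v w ψ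
  | FormCAB.cdia A B φ ψ => w (FormCAB.cdia A B φ ψ)

/-- Derivability in the axiomatic system for CCSR_AB. -/
inductive DerCAB {Agt AP : Type} : FormCAB Agt AP → Prop
  | r1 (Γ : List (FormCAB Agt AP)) (ψ : FormCAB Agt AP) :
      (∀ φ ∈ Γ, DerCAB φ) →
      (∀ (v : AP → Prop) (w : FormCAB Agt AP → Prop),
        (∀ φ ∈ Γ, evalCAB v w φ) → evalCAB v w ψ) →
      DerCAB ψ
  | r2 (A : Set Agt) (φ : FormCAB Agt AP) :
      DerCAB φ → DerCAB (FormCAB.cdia A ∅ φ FormCAB.top)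
  | r3 (A : Set Agt) (φ1 φ2 χ : FormCAB Agt AP) :
      DerCAB (FormCAB.or (FormCAB.cdia A ∅ (FormCAB.or φ1 φ2) FormCAB.top) χ) →
      DerCAB (FormCAB.or (FormCAB.cdia A ∅ φ1 FormCAB.top)
        (FormCAB.or (FormCAB.cdia Set.univ ∅ φ2 FormCAB.top) χ))
  | r4 (A B : Set Agt) (φ ψ χ : FormCAB Agt AP) :
      DerCAB (FormCAB.or (FormCAB.cdia A ∅ (FormCAB.and φ ψ) FormCAB.top) χ) →
      DerCAB (FormCAB.or (FormCAB.cdia A B φ ψ) χ)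
  | r5 (A B : Set Agt) (φ ψ χ : FormCAB Agt AP) :
      DerCAB (FormCAB.or (FormCAB.and
        (FormCAB.cdia (A ∪ B) ∅ (FormCAB.and φ ψ) FormCAB.top)
        (FormCAB.cdia ∅ ∅ φ FormCAB.top)) χ) →
      DerCAB (FormCAB.or (FormCAB.cdia A B φ ψ) χ)

/-- Literals of Φ_CCSR_AB. -/
inductive IsLitCAB {Agt AP : Type} : FormCAB Agt AP → Prop
  | atom (p : AP) : IsLitCAB (FormCAB.atom p)
  | natom (p : AP) : IsLitCAB (FormCAB.natom p)

/-- Elementary disjunctions (⊥ is the empty disjunction). -/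
inductive IsElemDisjCAB {Agt AP : Type} : FormCAB Agt AP → Prop
  | bot : IsElemDisjCAB FormCAB.bot
  | lit {φ : FormCAB Agt AP} : IsLitCAB φ → IsElemDisjCAB φ
  | or {φ ψ : FormCAB Agt AP} : IsElemDisjCAB φ → IsElemDisjCAB ψ →
      IsElemDisjCAB (FormCAB.or φ ψ)

/-- Finite disjunction of a list of formulas (empty disjunction is ⊥). -/
def bigOrCAB {Agt AP : Type} : List (FormCAB Agt AP) → FormCAB Agt AP
  | [] => FormCAB.bot
  | φ :: l => FormCAB.or φ (bigOrCAB l)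


namespace FDV

variable {Agt AP : Type}

/-- The joint action of the singleton coalition `{a}` playing `x`. -/
noncomputable def singletonJA {Act : Type} (a : Agt) (x : Act) : Agt → Option Act :=
  fun b => if b = a then some x else none

lemma restrict_singleton {Act : Type} (σ : Agt → Option Act) (a : Agt) (x : Act)
    (hx : σ a = some x) : restrictJA σ {a} = singletonJA a x := by
  funext b
  by_cases hb : b = a
  · subst hb
    simp [restrictJA, singletonJA, hx]
  · simp [restrictJA, singletonJA, hb]

/-- Actions available to agent `a` at state `s`. -/
def availOf (M : CGM Agt AP) (s : M.St) (a : Agt) : Set M.Act :=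
  {x | singletonJA a x ∈ M.aja s {a}}

lemma aja_mem_char (M : CGM Agt AP) (s : M.St) (A : Set Agt) (σ : Agt → Option M.Act) :
    σ ∈ M.aja s A ↔ ((∀ a, (σ a).isSome ↔ a ∈ A) ∧
      ∀ a x, σ a = some x → x ∈ availOf M s a) := by
  constructor
  · intro h
    have hdom := M.aja_dom s A σ h
    refine ⟨hdom, ?_⟩
    intro a x hx
    have haA : a ∈ A := (hdom a).1 (by simp [hx])
    have hAne : A.Nonempty := ⟨a, haA⟩
    have h2 := (M.aja_glue s A σ hAne hdom).1 h a haA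
    rwa [restrict_singleton σ a x hx] at h2
  · rintro ⟨hdom, hval⟩
    by_cases hA : A.Nonempty
    · refine (M.aja_glue s A σ hA hdom).2 ?_
      intro a ha
      obtain ⟨x, hx⟩ := Option.isSome_iff_exists.1 ((hdom a).2 ha)
      rw [restrict_singleton σ a x hx]
      exact hval a x hx
    · rw [Set.not_nonempty_iff_eq_empty] at hA
      subst hA
      obtain ⟨τ, hτ⟩ := M.aja_ne s ∅
      have hτdom := M.aja_dom s ∅ τ hτ
      have : σ = τ := by
        funext a
        have h1 : σ a = none := by
          have := (hdom a)
          simp only [Set.mem_empty_iff_false, iff_false] at this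
          exact Option.not_isSome_iff_eq_none.1 this
        have h2 : τ a = none := by
          have := (hτdom a)
          simp only [Set.mem_empty_iff_false, iff_false] at this
          exact Option.not_isSome_iff_eq_none.1 this
        rw [h1, h2]
      rwa [this]

lemma availOf_ne (M : CGM Agt AP) (s : M.St) (a : Agt) : (availOf M s a).Nonempty := by
  obtain ⟨σ, hσ⟩ := M.aja_ne s {a}
  have hdom := M.aja_dom s {a} σ hσ
  obtain ⟨x, hx⟩ := Option.isSome_iff_exists.1 ((hdom a).2 rfl)
  exact ⟨x, ((aja_mem_char M s {a} σ).1 hσ).2 a x hx⟩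

noncomputable def oOf (M : CGM Agt AP) (s : M.St) (σ : Agt → Option M.Act) : M.St :=
  if h : σ ∈ M.aja s Set.univ then (M.out_univ s σ h).choose else Classical.choice M.st_ne

lemma out_oOf (M : CGM Agt AP) (s : M.St) (σ : Agt → Option M.Act)
    (h : σ ∈ M.aja s Set.univ) : M.out s σ = {oOf M s σ} := by
  rw [oOf, dif_pos h]
  exact (M.out_univ s σ h).choose_spec

lemma subJA_full_eq {Act : Type} {σ σ' : Agt → Option Act} (hσ : ∀ a, (σ a).isSome)
    (h : subJA σ σ') : σ' = σ := by
  funext a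
  obtain ⟨x, hx⟩ := Option.isSome_iff_exists.1 (hσ a)
  rw [h a x hx, hx]

lemma out_char (M : CGM Agt AP) (s : M.St) (A : Set Agt) (σ : Agt → Option M.Act)
    (hσ : σ ∈ M.aja s A) :
    M.out s σ = {t | ∃ σ' ∈ M.aja s Set.univ, subJA σ σ' ∧ t = oOf M s σ'} := by
  by_cases hA : A = Set.univ
  · subst hA
    have hfull : ∀ a, (σ a).isSome := fun a => (M.aja_dom s _ σ hσ a).2 trivial
    rw [out_oOf M s σ hσ]
    ext t
    simp only [Set.mem_singleton_iff, Set.mem_setOf_eq]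
    constructor
    · intro ht
      exact ⟨σ, hσ, fun a x hx => hx, ht⟩
    · rintro ⟨σ', hσ', hsub, ht⟩
      rwa [subJA_full_eq hfull hsub] at ht
  · rw [M.out_glue s A hA σ hσ]
    ext t
    simp only [Set.mem_setOf_eq]
    constructor
    · rintro ⟨σ', h1, h2, h3⟩
      rw [out_oOf M s σ' h1] at h3
      exact ⟨σ', h1, h2, h3⟩
    · rintro ⟨σ', h1, h2, h3⟩
      refine ⟨σ', h1, h2, ?_⟩
      rw [out_oOf M s σ' h1]
      exact h3

lemma uplus_mem_aja (M : CGM Agt AP) (s : M.St) {A B : Set Agt}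
    {σA σB : Agt → Option M.Act} (hA : σA ∈ M.aja s A) (hB : σB ∈ M.aja s B) :
    uplusJA A B σA σB ∈ M.aja s (A ∪ B) := by
  obtain ⟨hAdom, hAval⟩ := (aja_mem_char M s A σA).1 hA
  obtain ⟨hBdom, hBval⟩ := (aja_mem_char M s B σB).1 hB
  rw [aja_mem_char]
  constructor
  · intro a
    by_cases ha : a ∈ A
    · simp [uplusJA, ha, hAdom, Set.mem_union]
    · by_cases hb : a ∈ B
      · simp [uplusJA, ha, hb, hBdom, Set.mem_union]
      · simp [uplusJA, ha, hb, Set.mem_union]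
  · intro a x hx
    by_cases ha : a ∈ A
    · exact hAval a x (by simpa [uplusJA, ha] using hx)
    · by_cases hb : a ∈ B
      · exact hBval a x (by simpa [uplusJA, ha, hb] using hx)
      · simp [uplusJA, ha, hb] at hx

lemma subJA_uplus_left {Act : Type} {A B : Set Agt} {σA σB : Agt → Option Act}
    (hdom : ∀ a, (σA a).isSome ↔ a ∈ A) : subJA σA (uplusJA A B σA σB) := by
  intro a x hx
  have ha : a ∈ A := (hdom a).1 (by simp [hx])
  simp [uplusJA, ha, hx]

lemma subJA_trans {Act : Type} {σ1 σ2 σ3 : Agt → Option Act}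
    (h1 : subJA σ1 σ2) (h2 : subJA σ2 σ3) : subJA σ1 σ3 :=
  fun a x hx => h2 a x (h1 a x hx)

lemma sat_bigOr (M : CGM Agt AP) (s : M.St) (l : List (FormCAB Agt AP)) :
    satCAB M s (bigOrCAB l) ↔ ∃ χ ∈ l, satCAB M s χ := by
  induction l with
  | nil => simp [bigOrCAB, satCAB]
  | cons χ l ih =>
    simp only [bigOrCAB, satCAB, ih, List.mem_cons]
    constructor
    · rintro (h | ⟨χ', h1, h2⟩)
      · exact ⟨χ, Or.inl rfl, h⟩
      · exact ⟨χ', Or.inr h1, h2⟩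
    · rintro ⟨χ', (rfl | h1), h2⟩
      · exact Or.inl h2
      · exact Or.inr ⟨χ', h1, h2⟩

lemma elemDisj_lab {γ : FormCAB Agt AP} (hγ : IsElemDisjCAB γ)
    (M M' : CGM Agt AP) (s : M.St) (s' : M'.St) (hlab : M.lab s = M'.lab s') :
    satCAB M s γ ↔ satCAB M' s' γ := by
  induction hγ with
  | bot => simp [satCAB]
  | lit h =>
    cases h with
    | atom p => simp [satCAB, hlab]
    | natom p => simp [satCAB, hlab]
  | or h1 h2 ih1 ih2 => simp [satCAB, ih1, ih2]

end FDV
namespace FDV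

variable {Agt AP : Type}

def mkAja {St Act : Type} (avail : St → Agt → Set Act) :
    St → Set Agt → Set (Agt → Option Act) :=
  fun s A => {σ | (∀ a, (σ a).isSome ↔ a ∈ A) ∧ ∀ a x, σ a = some x → x ∈ avail s a}

def mkOut {St Act : Type} (avail : St → Agt → Set Act)
    (o : St → (Agt → Option Act) → St) : St → (Agt → Option Act) → Set St :=
  fun s σ => {t | ∃ σ' ∈ mkAja avail s Set.univ, subJA σ σ' ∧ t = o s σ'}

lemma mkAja_full {St Act : Type} (avail : St → Agt → Set Act) (s : St)
    {σ : Agt → Option Act} (h : σ ∈ mkAja avail s Set.univ) : ∀ a, (σ a).isSome :=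
  fun a => (h.1 a).2 trivial

lemma mkOut_full {St Act : Type} (avail : St → Agt → Set Act)
    (o : St → (Agt → Option Act) → St) (s : St) {σ : Agt → Option Act}
    (h : σ ∈ mkAja avail s Set.univ) : mkOut avail o s σ = {o s σ} := by
  ext t
  simp only [mkOut, Set.mem_setOf_eq, Set.mem_singleton_iff]
  constructor
  · rintro ⟨σ', h1, h2, h3⟩
    rwa [subJA_full_eq (mkAja_full avail s h) h2] at h3
  · intro ht
    exact ⟨σ, h, fun a x hx => hx, ht⟩

noncomputable def mkCGM (St Act : Type) (hSt : Nonempty St) (hAct : Nonempty Act)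
    (avail : St → Agt → Set Act) (hav : ∀ s a, (avail s a).Nonempty)
    (o : St → (Agt → Option Act) → St) (lab : St → Set AP) : CGM Agt AP where
  St := St
  Act := Act
  st_ne := hSt
  act_ne := hAct
  aja := mkAja avail
  out := mkOut avail o
  lab := lab
  aja_ne := by
    intro s A
    refine ⟨fun a => if a ∈ A then some (hav s a).choose else none, ?_, ?_⟩
    · intro a
      by_cases h : a ∈ A <;> simp [h]
    · intro a x hx
      by_cases h : a ∈ A
      · simp only [if_pos h, Option.some.injEq] at hx
        rw [← hx]
        exact (hav s a).choose_spec
      · simp [if_neg h] at hx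
  aja_dom := fun s A σ h => h.1
  aja_glue := by
    intro s A σ hA hdom
    constructor
    · intro h a ha
      constructor
      · intro b
        by_cases hb : b = a
        · subst hb
          simp [restrictJA, (hdom b).2 ha]
        · simp [restrictJA, hb]
      · intro b x hx
        by_cases hb : b = a
        · subst hb
          refine h.2 b x ?_
          simpa [restrictJA] using hx
        · simp [restrictJA, hb] at hx
    · intro h
      refine ⟨hdom, ?_⟩
      intro a x hx
      have ha : a ∈ A := (hdom a).1 (by simp [hx])
      refine (h a ha).2 a x ?_
      simpa [restrictJA] using hx
  out_univ := by
    intro s σ h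
    exact ⟨o s σ, mkOut_full avail o s h⟩
  out_univ_not := by
    intro s σ hfull h
    ext t
    simp only [mkOut, Set.mem_setOf_eq, Set.mem_empty_iff_false, iff_false, not_exists]
    rintro σ' ⟨h1, h2, h3⟩
    rw [subJA_full_eq hfull h2] at h1
    exact h h1
  out_glue := by
    intro s A hA σ hσ
    ext t
    simp only [mkOut, Set.mem_setOf_eq]
    constructor
    · rintro ⟨σ', h1, h2, h3⟩
      exact ⟨σ', h1, h2, σ', h1, fun a x hx => hx, h3⟩
    · rintro ⟨σ', h1, h2, σ'', h1', h2', h3⟩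
      rw [subJA_full_eq (mkAja_full avail s h1) h2'] at h3
      exact ⟨σ', h1, h2, h3⟩
  out_not := by
    intro s A σ hdom hA hσ
    have : ∃ a x, σ a = some x ∧ x ∉ avail s a := by
      by_contra hc
      push_neg at hc
      exact hσ ⟨hdom, fun a x hx => hc a x hx⟩
    obtain ⟨a, x, hx, hnx⟩ := this
    ext t
    simp only [mkOut, Set.mem_setOf_eq, Set.mem_empty_iff_false, iff_false, not_exists]
    rintro σ' ⟨h1, h2, h3⟩
    exact hnx (h1.2 a x (h2 a x hx))

@[simp] lemma mkCGM_St {St Act : Type} (hSt hAct avail hav o lab) :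
    (mkCGM (Agt := Agt) (AP := AP) St Act hSt hAct avail hav o lab).St = St := rfl

@[simp] lemma mkCGM_Act {St Act : Type} (hSt hAct avail hav o lab) :
    (mkCGM (Agt := Agt) (AP := AP) St Act hSt hAct avail hav o lab).Act = Act := rfl

@[simp] lemma mkCGM_aja {St Act : Type} (hSt hAct avail hav o lab) :
    (mkCGM (Agt := Agt) (AP := AP) St Act hSt hAct avail hav o lab).aja = mkAja avail := rfl

@[simp] lemma mkCGM_out {St Act : Type} (hSt hAct avail hav o lab) :
    (mkCGM (Agt := Agt) (AP := AP) St Act hSt hAct avail hav o lab).out = mkOut avail o := rfl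

@[simp] lemma mkCGM_lab {St Act : Type} (hSt hAct avail hav o lab) :
    (mkCGM (Agt := Agt) (AP := AP) St Act hSt hAct avail hav o lab).lab = lab := rfl

end FDV
namespace FDV

variable {Agt AP : Type}

section Combo

variable {K : Type} [DecidableEq K] (N : K → CGM Agt AP) (RAct : Type)

abbrev CSt : Type := Unit ⊕ Σ k : K, (N k).St
abbrev CAct : Type := RAct ⊕ Σ k : K, (N k).Act

noncomputable def parseK (k : K) : CAct N RAct → Option (N k).Act
  | Sum.inr y =>
      if h : y.1 = k then some (cast (congrArg (fun k' => (N k').Act) h) y.2) else none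
  | Sum.inl _ => none

def parseR : CAct N RAct → Option RAct
  | Sum.inl r => some r
  | Sum.inr _ => none

noncomputable def cavail : CSt N → Agt → Set (CAct N RAct)
  | Sum.inl _, _ => Set.range Sum.inl
  | Sum.inr ⟨k, t⟩, a => (fun α => Sum.inr ⟨k, α⟩) '' availOf (N k) t a

variable (oroot : (Agt → Option RAct) → Σ k : K, (N k).St)

noncomputable def co : CSt N → (Agt → Option (CAct N RAct)) → CSt N
  | Sum.inl _, σ => Sum.inr (oroot (fun a => (σ a).bind (parseR N RAct)))
  | Sum.inr ⟨k, t⟩, σ => Sum.inr ⟨k, oOf (N k) t (fun a => (σ a).bind (parseK N RAct k))⟩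

variable (hR : Nonempty RAct) (labroot : Set AP)

noncomputable def clab : CSt N → Set AP
  | Sum.inl _ => labroot
  | Sum.inr ⟨k, t⟩ => (N k).lab t

noncomputable def combo : CGM Agt AP :=
  mkCGM (CSt N) (CAct N RAct) ⟨Sum.inl ()⟩ ⟨Sum.inl hR.some⟩ (cavail N RAct)
    (by
      rintro (s | ⟨k, t⟩) a
      · exact ⟨Sum.inl hR.some, Set.mem_range_self _⟩
      · obtain ⟨x, hx⟩ := availOf_ne (N k) t a
        exact ⟨Sum.inr ⟨k, x⟩, Set.mem_image_of_mem _ hx⟩)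
    (co N RAct oroot) (clab N labroot)

noncomputable def liftJA (k : K) (σ : Agt → Option (N k).Act) : Agt → Option (CAct N RAct) :=
  fun a => (σ a).map (fun α => Sum.inr ⟨k, α⟩)

lemma parseK_lift (k : K) (x : Option (N k).Act) :
    (x.map (fun α => (Sum.inr ⟨k, α⟩ : CAct N RAct))).bind (parseK N RAct k) = x := by
  cases x with
  | none => rfl
  | some α =>
      simp only [Option.map_some, Option.bind_some, parseK, dif_pos rfl]
      rw [dif_pos trivial]
      exact congrArg some (cast_eq_iff_heq.mpr HEq.rfl)

lemma lift_bind_parseK (k : K) (σ : Agt → Option (N k).Act) :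
    (fun a => (liftJA N RAct k σ a).bind (parseK N RAct k)) = σ := by
  funext a
  exact parseK_lift N RAct k (σ a)

lemma inrmk_inj (k : K) : Function.Injective (fun α : (N k).Act => (Sum.inr ⟨k, α⟩ : CAct N RAct)) := by
  intro a b h
  have h2 : (⟨k, a⟩ : Σ k, (N k).Act) = ⟨k, b⟩ := by injection h
  exact eq_of_heq (Sigma.mk.inj_iff.mp h2).2

lemma lift_mem_aja (k : K) (t : (N k).St) (A : Set Agt) (σ : Agt → Option (N k).Act) :
    liftJA N RAct k σ ∈ mkAja (cavail N RAct) (Sum.inr ⟨k, t⟩) A ↔ σ ∈ (N k).aja t A := by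
  rw [aja_mem_char]
  constructor
  · rintro ⟨hdom, hval⟩
    constructor
    · intro a
      have := hdom a
      simpa [liftJA, Option.isSome_map] using this
    · intro a x hx
      have : liftJA N RAct k σ a = some (Sum.inr ⟨k, x⟩) := by simp [liftJA, hx]
      have h2 := hval a _ this
      simp only [cavail, Set.mem_image] at h2
      obtain ⟨α, hα, heq⟩ := h2
      have : α = x := inrmk_inj N RAct k heq
      rwa [← this]
  · rintro ⟨hdom, hval⟩
    constructor
    · intro a
      have := hdom a
      simpa [liftJA, Option.isSome_map] using this
    · intro a x hx
      simp only [liftJA, Option.map_eq_some_iff] at hx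
      obtain ⟨α, hα, rfl⟩ := hx
      exact Set.mem_image_of_mem _ (hval a α hα)

lemma mem_aja_lift (k : K) (t : (N k).St) (A : Set Agt) (σs : Agt → Option (CAct N RAct))
    (h : σs ∈ mkAja (cavail N RAct) (Sum.inr ⟨k, t⟩) A) :
    ∃ σ, σs = liftJA N RAct k σ ∧ σ ∈ (N k).aja t A := by
  refine ⟨fun a => (σs a).bind (parseK N RAct k), ?_, ?_⟩
  · funext a
    cases hx : σs a with
    | none => simp [liftJA, hx]
    | some x =>
        have h2 := h.2 a x hx
        simp only [cavail, Set.mem_image] at h2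
        obtain ⟨α, hα, rfl⟩ := h2
        simp only [liftJA, hx, Option.bind_some]
        rw [show (parseK N RAct k (Sum.inr ⟨k, α⟩)) = some α from by
          simp only [parseK, dif_pos rfl]
          rw [dif_pos trivial]
          exact congrArg some (cast_eq_iff_heq.mpr HEq.rfl)]
        rfl
  · rw [← lift_mem_aja N RAct k t A]
    have : liftJA N RAct k (fun a => (σs a).bind (parseK N RAct k)) = σs := by
      funext a
      cases hx : σs a with
      | none => simp [liftJA, hx]
      | some x =>
          have h2 := h.2 a x hx
          simp only [cavail, Set.mem_image] at h2
          obtain ⟨α, hα, rfl⟩ := h2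
          simp only [liftJA, hx, Option.bind_some]
          rw [show (parseK N RAct k (Sum.inr ⟨k, α⟩)) = some α from by
            simp only [parseK, dif_pos rfl]
            rw [dif_pos trivial]
            exact congrArg some (cast_eq_iff_heq.mpr HEq.rfl)]
          rfl
    rwa [this]

lemma subJA_lift_iff (k : K) (σ σ' : Agt → Option (N k).Act) :
    subJA (liftJA N RAct k σ) (liftJA N RAct k σ') ↔ subJA σ σ' := by
  constructor
  · intro h a x hx
    have := h a (Sum.inr ⟨k, x⟩) (by simp [liftJA, hx])
    simp only [liftJA, Option.map_eq_some_iff] at this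
    obtain ⟨α, hα, hαx⟩ := this
    rwa [inrmk_inj N RAct k hαx] at hα
  · intro h a x hx
    simp only [liftJA, Option.map_eq_some_iff] at hx ⊢
    obtain ⟨α, hα, rfl⟩ := hx
    exact ⟨α, h a α hα, rfl⟩

lemma lift_uplus (k : K) (A B : Set Agt) (σA σB : Agt → Option (N k).Act) :
    liftJA N RAct k (uplusJA A B σA σB) =
      uplusJA A B (liftJA N RAct k σA) (liftJA N RAct k σB) := by
  funext a
  simp only [liftJA, uplusJA]
  split_ifs <;> rfl

lemma lift_out (k : K) (t : (N k).St) (A : Set Agt) (σ : Agt → Option (N k).Act)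
    (hσ : σ ∈ (N k).aja t A) :
    mkOut (cavail N RAct) (co N RAct oroot) (Sum.inr ⟨k, t⟩) (liftJA N RAct k σ) =
      (fun u => (Sum.inr ⟨k, u⟩ : CSt N)) '' (N k).out t σ := by
  rw [out_char (N k) t A σ hσ]
  ext ts
  simp only [mkOut, Set.mem_setOf_eq, Set.mem_image]
  constructor
  · rintro ⟨σs', h1, h2, h3⟩
    obtain ⟨σ', rfl, hσ'⟩ := mem_aja_lift N RAct k t Set.univ σs' h1
    refine ⟨oOf (N k) t σ', ⟨σ', hσ', (subJA_lift_iff N RAct k σ σ').1 h2, rfl⟩, ?_⟩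
    rw [h3]
    simp only [co]
    rw [lift_bind_parseK]
  · rintro ⟨u, ⟨σ', h1, h2, rfl⟩, rfl⟩
    refine ⟨liftJA N RAct k σ', (lift_mem_aja N RAct k t Set.univ σ').2 h1,
      (subJA_lift_iff N RAct k σ σ').2 h2, ?_⟩
    simp only [co]
    rw [lift_bind_parseK]

lemma combo_transfer (φ : FormCAB Agt AP) :
    ∀ (k : K) (t : (N k).St),
      satCAB (combo N RAct oroot hR labroot) (Sum.inr ⟨k, t⟩) φ ↔ satCAB (N k) t φ := by
  induction φ with
  | top => intro k t; simp [satCAB]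
  | bot => intro k t; simp [satCAB]
  | atom p => intro k t; simp [satCAB, combo, clab]
  | natom p => intro k t; simp [satCAB, combo, clab]
  | and φ ψ ihφ ihψ => intro k t; simp [satCAB, ihφ, ihψ]
  | or φ ψ ihφ ihψ => intro k t; simp [satCAB, ihφ, ihψ]
  | cdia A B φ ψ ihφ ihψ =>
    intro k t
    show (∃ σA ∈ (combo N RAct oroot hR labroot).aja (Sum.inr ⟨k, t⟩) A, _ ∧ _) ↔ _
    constructor
    · rintro ⟨σAs, hσAs, hφs, σBs, hσBs, hψs⟩
      obtain ⟨σA, rfl, hσA⟩ := mem_aja_lift N RAct k t A σAs hσAs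
      obtain ⟨σB, rfl, hσB⟩ := mem_aja_lift N RAct k t B σBs hσBs
      refine ⟨σA, hσA, ?_, σB, hσB, ?_⟩
      · intro u hu
        have : (Sum.inr ⟨k, u⟩ : CSt N) ∈
            (combo N RAct oroot hR labroot).out (Sum.inr ⟨k, t⟩) (liftJA N RAct k σA) := by
          show _ ∈ mkOut _ _ _ _
          rw [lift_out N RAct oroot k t A σA hσA]
          exact Set.mem_image_of_mem _ hu
        exact (ihφ k u).1 (hφs _ this)
      · intro u hu
        have hup : uplusJA A B σA σB ∈ (N k).aja t (A ∪ B) := uplus_mem_aja (N k) t hσA hσB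
        have : (Sum.inr ⟨k, u⟩ : CSt N) ∈
            (combo N RAct oroot hR labroot).out (Sum.inr ⟨k, t⟩)
              (uplusJA A B (liftJA N RAct k σA) (liftJA N RAct k σB)) := by
          show (Sum.inr ⟨k, u⟩ : CSt N) ∈ mkOut (cavail N RAct) (co N RAct oroot) (Sum.inr ⟨k, t⟩)
            (uplusJA A B (liftJA N RAct k σA) (liftJA N RAct k σB))
          rw [← lift_uplus, lift_out N RAct oroot k t (A ∪ B) _ hup]
          exact Set.mem_image_of_mem _ hu
        exact (ihψ k u).1 (hψs _ this)
    · rintro ⟨σA, hσA, hφs, σB, hσB, hψs⟩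
      refine ⟨liftJA N RAct k σA, (lift_mem_aja N RAct k t A σA).2 hσA, ?_,
        liftJA N RAct k σB, (lift_mem_aja N RAct k t B σB).2 hσB, ?_⟩
      · intro ts hts
        have : ts ∈ mkOut (cavail N RAct) (co N RAct oroot) (Sum.inr ⟨k, t⟩)
            (liftJA N RAct k σA) := hts
        rw [lift_out N RAct oroot k t A σA hσA] at this
        obtain ⟨u, hu, rfl⟩ := this
        exact (ihφ k u).2 (hφs u hu)
      · intro ts hts
        have hup : uplusJA A B σA σB ∈ (N k).aja t (A ∪ B) := uplus_mem_aja (N k) t hσA hσB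
        have : ts ∈ mkOut (cavail N RAct) (co N RAct oroot) (Sum.inr ⟨k, t⟩)
            (liftJA N RAct k (uplusJA A B σA σB)) := by
          rw [lift_uplus]
          exact hts
        rw [lift_out N RAct oroot k t (A ∪ B) _ hup] at this
        obtain ⟨u, hu, rfl⟩ := this
        exact (ihψ k u).2 (hψs u hu)

end Combo

end FDV
namespace FDV

variable {Agt AP : Type}

section Root

variable {ι : Type} [DecidableEq ι] (PIP : Finset ι) (C : ι → Set Agt)
variable (N : Option ι → CGM Agt AP) (pt : ∀ k, (N k).St)

/-- A valid vote at the root: agent `a` votes for defeating disjunct `j` with priority `n`. -/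
def ValidV (ρ : Agt → Option (Option (ι × ℕ))) (a : Agt) (j : ι) (n : ℕ) : Prop :=
  ρ a = some (some (j, n)) ∧ j ∈ PIP ∧ a ∉ C j

/-- A winning vote: valid, with strictly largest priority. -/
def WinV (ρ : Agt → Option (Option (ι × ℕ))) (a : Agt) (j : ι) (n : ℕ) : Prop :=
  ValidV PIP C ρ a j n ∧ ∀ a' j' n', a' ≠ a → ValidV PIP C ρ a' j' n' → n' < n

lemma winV_unique {ρ a j n a' j' n'} (h : WinV PIP C ρ a j n) (h' : WinV PIP C ρ a' j' n') :
    j = j' := by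
  by_cases haa : a = a'
  · subst haa
    have := (h.1.1).symm.trans h'.1.1
    simp only [Option.some.injEq, Prod.mk.injEq] at this
    exact this.1
  · have l1 := h.2 a' j' n' (fun hh => haa hh.symm) h'.1
    have l2 := h'.2 a j n haa h.1
    omega

noncomputable def orootV (ρ : Agt → Option (Option (ι × ℕ))) : Σ k : Option ι, (N k).St :=
  if h : ∃ a j n, WinV PIP C ρ a j n then
    ⟨some h.choose_spec.choose, pt (some h.choose_spec.choose)⟩
  else ⟨none, pt none⟩

lemma orootV_shape (ρ : Agt → Option (Option (ι × ℕ))) :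
    ∃ k, orootV PIP C N pt ρ = ⟨k, pt k⟩ := by
  unfold orootV
  by_cases h : ∃ a j n, WinV PIP C ρ a j n
  · exact ⟨_, dif_pos h⟩
  · exact ⟨none, dif_neg h⟩

lemma orootV_win {ρ a j n} (h : WinV PIP C ρ a j n) :
    orootV PIP C N pt ρ = ⟨some j, pt (some j)⟩ := by
  have hex : ∃ a j n, WinV PIP C ρ a j n := ⟨a, j, n, h⟩
  unfold orootV
  rw [dif_pos hex]
  have hw := hex.choose_spec.choose_spec.choose_spec
  have : hex.choose_spec.choose = j := winV_unique PIP C hw h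
  rw [this]

def prioOf : Option (Option (ι × ℕ)) → ℕ
  | some (some (_, n)) => n
  | _ => 0

variable [Fintype Agt]

lemma steer (j : ι) (hj : j ∈ PIP) (hC : C j ≠ Set.univ)
    (σ : Agt → Option (CAct N (Option (ι × ℕ))))
    (hσ : σ ∈ mkAja (cavail N (Option (ι × ℕ))) (Sum.inl ()) (C j)) :
    ∃ σ', σ' ∈ mkAja (cavail N (Option (ι × ℕ))) (Sum.inl ()) Set.univ ∧ subJA σ σ' ∧
      co N (Option (ι × ℕ)) (orootV PIP C N pt) (Sum.inl ()) σ' =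
        Sum.inr ⟨some j, pt (some j)⟩ := by
  obtain ⟨b, hb⟩ : ∃ b, b ∉ C j := by
    by_contra hc
    push_neg at hc
    exact hC (Set.eq_univ_iff_forall.2 hc)
  obtain ⟨Nmax, hNmax⟩ : ∃ Nm : ℕ, Nm =
      (Finset.univ.sup fun a => prioOf ((σ a).bind (parseR N (Option (ι × ℕ))))) + 1 :=
    ⟨_, rfl⟩
  obtain ⟨σ', hσ'⟩ : ∃ σ' : Agt → Option (CAct N (Option (ι × ℕ))), σ' = fun a =>
      if a ∈ C j then σ a else if a = b then some (Sum.inl (some (j, Nmax)))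
        else some (Sum.inl none) := ⟨_, rfl⟩
  have hσ'CJ : ∀ a, a ∈ C j → σ' a = σ a := by
    intro a ha
    rw [hσ']
    simp only [if_pos ha]
  have hσ'b : σ' b = some (Sum.inl (some (j, Nmax))) := by
    rw [hσ']
    simp [hb]
  have hσ'other : ∀ a, a ∉ C j → a ≠ b → σ' a = some (Sum.inl none) := by
    intro a ha hab
    rw [hσ']
    simp only [if_neg ha, if_neg hab]
  have hσ'mem : σ' ∈ mkAja (cavail N (Option (ι × ℕ))) (Sum.inl ()) Set.univ := by
    constructor
    · intro a
      simp only [Set.mem_univ, iff_true]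
      by_cases ha : a ∈ C j
      · rw [hσ'CJ a ha]
        exact (hσ.1 a).2 ha
      · by_cases hab : a = b
        · subst hab
          rw [hσ'b]
          rfl
        · rw [hσ'other a ha hab]
          rfl
    · intro a x hx
      by_cases ha : a ∈ C j
      · rw [hσ'CJ a ha] at hx
        exact hσ.2 a x hx
      · by_cases hab : a = b
        · subst hab
          rw [hσ'b] at hx
          cases hx
          exact ⟨_, rfl⟩
        · rw [hσ'other a ha hab] at hx
          cases hx
          exact ⟨_, rfl⟩
  have hsub : subJA σ σ' := by
    intro a x hx
    have ha : a ∈ C j := (hσ.1 a).1 (by simp [hx])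
    rw [hσ'CJ a ha]
    exact hx
  refine ⟨σ', hσ'mem, hsub, ?_⟩
  show Sum.inr (orootV PIP C N pt (fun a => (σ' a).bind (parseR N (Option (ι × ℕ))))) = _
  congr 1
  apply orootV_win PIP C N pt (a := b) (n := Nmax)
  constructor
  · refine ⟨?_, hj, hb⟩
    show (σ' b).bind (parseR N (Option (ι × ℕ))) = _
    rw [hσ'b]
    rfl
  · intro a' j' n' ha' hv
    obtain ⟨hv1, hv2, hv3⟩ := hv
    have hv1' : (σ' a').bind (parseR N (Option (ι × ℕ))) = some (some (j', n')) := hv1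
    by_cases ha : a' ∈ C j
    · rw [hσ'CJ a' ha] at hv1'
      have hle : n' ≤ Finset.univ.sup fun a => prioOf ((σ a).bind (parseR N (Option (ι × ℕ)))) := by
        have h5 : prioOf ((σ a').bind (parseR N (Option (ι × ℕ)))) ≤
            Finset.univ.sup fun a => prioOf ((σ a).bind (parseR N (Option (ι × ℕ)))) :=
          Finset.le_sup (f := fun a => prioOf ((σ a).bind (parseR N (Option (ι × ℕ)))))
            (Finset.mem_univ a')
        rw [hv1'] at h5
        exact h5
      omega
    · exfalso
      rw [hσ'other a' ha ha'] at hv1'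
      simp only [parseR, Option.bind_some] at hv1'
      cases hv1'

end Root

end FDV

open FDV in
/-- First downward validity for CCSR_AB. If the standard disjunction
γ ∨ ⋁_{j∈PI}⟨A_j⟩φ_j⟨B_j⟩_c ψ_j is valid, then γ is valid, or for every PI* with
PI^f ⊆ PI* ⊆ PI^fs one of the three reduction conditions holds
(PI^f = {j ∈ PI : A_j = AG}, PI^fs = {j ∈ PI : A_j ∪ B_j = AG}). -/
theorem first_downward_validity_CCSR_AB
    {Agt AP : Type} [Fintype Agt] [Nonempty Agt] [Countable AP]
    {ι : Type} [DecidableEq ι]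
    (γ : FormCAB Agt AP) (hγ : IsElemDisjCAB γ)
    (PI : Finset ι) (A B : ι → Set Agt) (φ ψ : ι → FormCAB Agt AP)
    (hval : validCAB (FormCAB.or γ
      (bigOrCAB (PI.toList.map fun j => FormCAB.cdia (A j) (B j) (φ j) (ψ j))))) :
    validCAB γ ∨
      ∀ PIs : Finset ι,
        (PI.filter fun j => A j = Set.univ) ⊆ PIs →
        PIs ⊆ (PI.filter fun j => A j ∪ B j = Set.univ) →
        (validCAB (bigOrCAB (PIs.toList.map fun j => FormCAB.and (φ j) (ψ j))) ∨
         (∃ j' ∈ PI \ PIs,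
           validCAB (FormCAB.or
             (bigOrCAB (PIs.toList.map fun j => FormCAB.and (φ j) (ψ j)))
             (FormCAB.and (φ j') (ψ j')))) ∨
         (∃ j' ∈ PI \ PIs,
           validCAB (FormCAB.or
             (bigOrCAB (PIs.toList.map fun j => FormCAB.and (φ j) (ψ j)))
             (φ j')) ∧
           A j' ∪ B j' = Set.univ)) := by
  classical
  by_cases hγv : validCAB γ
  · exact Or.inl hγv
  right
  intro P hPf hPfs
  by_contra hcon
  push_neg at hcon
  obtain ⟨h1, h2, h3⟩ := hcon
  have negvalid : ∀ χ : FormCAB Agt AP, ¬ validCAB χ →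
      ∃ M : CGM Agt AP, ∃ s : M.St, ¬ satCAB M s χ := by
    intro χ h
    by_contra hc
    push_neg at hc
    exact h fun M s => hc M s
  obtain ⟨Mg, sg, hsg⟩ := negvalid γ hγv
  set Θ := bigOrCAB (P.toList.map fun j => FormCAB.and (φ j) (ψ j)) with hΘ
  obtain ⟨M0, s0, hs0⟩ := negvalid Θ h1
  have hC : ∀ j ∈ PI \ P, ∃ D : Σ M : CGM Agt AP, M.St,
      ¬ satCAB D.1 D.2 Θ ∧
      (A j ∪ B j = Set.univ → ¬ satCAB D.1 D.2 (φ j)) ∧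
      (A j ∪ B j ≠ Set.univ → ¬ satCAB D.1 D.2 (FormCAB.and (φ j) (ψ j))) := by
    intro j hj
    by_cases hAB : A j ∪ B j = Set.univ
    · have hnv : ¬ validCAB (FormCAB.or Θ (φ j)) := fun hv => (h3 j hj hv) hAB
      obtain ⟨M, s, hs⟩ := negvalid _ hnv
      have hs' : ¬ (satCAB M s Θ ∨ satCAB M s (φ j)) := hs
      push_neg at hs'
      exact ⟨⟨M, s⟩, hs'.1, fun _ => hs'.2, fun h => absurd hAB h⟩
    · have hnv : ¬ validCAB (FormCAB.or Θ (FormCAB.and (φ j) (ψ j))) := h2 j hj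
      obtain ⟨M, s, hs⟩ := negvalid _ hnv
      have hs' : ¬ (satCAB M s Θ ∨ satCAB M s (FormCAB.and (φ j) (ψ j))) := hs
      push_neg at hs'
      exact ⟨⟨M, s⟩, hs'.1, fun h => absurd h hAB, fun _ => hs'.2⟩
  choose D hD1 hD2 hD3 using hC
  set Df : Option ι → Σ M : CGM Agt AP, M.St := fun k =>
    match k with
    | none => ⟨M0, s0⟩
    | some j => if hj : j ∈ PI \ P then D j hj else ⟨M0, s0⟩ with hDf
  set N : Option ι → CGM Agt AP := fun k => (Df k).1 with hN
  set pt : ∀ k, (N k).St := fun k => (Df k).2 with hptdef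
  have hptΘ : ∀ k, ¬ satCAB (N k) (pt k) Θ := by
    intro k
    cases k with
    | none => exact hs0
    | some j =>
      by_cases hj : j ∈ PI \ P
      · have e : Df (some j) = D j hj := dif_pos hj
        show ¬ satCAB (Df (some j)).1 (Df (some j)).2 Θ
        rw [e]
        exact hD1 j hj
      · have e : Df (some j) = ⟨M0, s0⟩ := dif_neg hj
        show ¬ satCAB (Df (some j)).1 (Df (some j)).2 Θ
        rw [e]
        exact hs0
  have hptφ : ∀ j (hj : j ∈ PI \ P), A j ∪ B j = Set.univ →
      ¬ satCAB (N (some j)) (pt (some j)) (φ j) := by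
    intro j hj hAB
    have e : Df (some j) = D j hj := dif_pos hj
    show ¬ satCAB (Df (some j)).1 (Df (some j)).2 (φ j)
    rw [e]
    exact hD2 j hj hAB
  have hptψ : ∀ j (hj : j ∈ PI \ P), A j ∪ B j ≠ Set.univ →
      ¬ satCAB (N (some j)) (pt (some j)) (FormCAB.and (φ j) (ψ j)) := by
    intro j hj hAB
    have e : Df (some j) = D j hj := dif_pos hj
    show ¬ satCAB (Df (some j)).1 (Df (some j)).2 (FormCAB.and (φ j) (ψ j))
    rw [e]
    exact hD3 j hj hAB
  set C : ι → Set Agt := fun j => if A j ∪ B j = Set.univ then A j else A j ∪ B j with hCdef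
  have hCu : ∀ j, A j ∪ B j = Set.univ → C j = A j := fun j h => if_pos h
  have hCnu : ∀ j, A j ∪ B j ≠ Set.univ → C j = A j ∪ B j := fun j h => if_neg h
  have hCne : ∀ j ∈ PI \ P, C j ≠ Set.univ := by
    intro j hj
    obtain ⟨hjPI, hjP⟩ := Finset.mem_sdiff.1 hj
    by_cases hAB : A j ∪ B j = Set.univ
    · rw [hCu j hAB]
      intro hA
      exact hjP (hPf (Finset.mem_filter.2 ⟨hjPI, hA⟩))
    · rw [hCnu j hAB]
      exact hAB
  set CM : CGM Agt AP := combo N (Option (ι × ℕ)) (orootV (PI \ P) C N pt)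
    ⟨none⟩ (Mg.lab sg) with hCM
  have hroot' : satCAB CM (Sum.inl ()) γ ∨ satCAB CM (Sum.inl ())
      (bigOrCAB (PI.toList.map fun j => FormCAB.cdia (A j) (B j) (φ j) (ψ j))) :=
    hval CM (Sum.inl ())
  have hnγ : ¬ satCAB CM (Sum.inl ()) γ := by
    rw [elemDisj_lab hγ CM Mg (Sum.inl ()) sg rfl]
    exact hsg
  have hsat := hroot'.resolve_left hnγ
  replace hsat := (sat_bigOr _ _ _).1 hsat
  obtain ⟨χ, hχmem, hχ⟩ := hsat
  rw [List.mem_map] at hχmem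
  obtain ⟨j, hjl, rfl⟩ := hχmem
  have hjPI : j ∈ PI := Finset.mem_toList.1 hjl
  have houtmem : ∀ (σ τ : Agt → Option (CAct N (Option (ι × ℕ)))),
      τ ∈ mkAja (cavail N (Option (ι × ℕ))) (Sum.inl ()) Set.univ → subJA σ τ →
      co N (Option (ι × ℕ)) (orootV (PI \ P) C N pt) (Sum.inl ()) τ ∈
        CM.out (Sum.inl ()) σ := by
    intro σ τ hm hsub
    exact ⟨τ, hm, hsub, rfl⟩
  have htrans : ∀ (χ : FormCAB Agt AP) (k : Option ι) (t : (N k).St),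
      satCAB CM (Sum.inr ⟨k, t⟩) χ ↔ satCAB (N k) t χ :=
    fun χ k t => combo_transfer N (Option (ι × ℕ)) (orootV (PI \ P) C N pt)
      ⟨none⟩ (Mg.lab sg) χ k t
  obtain ⟨σA, hσA, hφj, σB, hσB, hψj⟩ := hχ
  by_cases hjP : j ∈ P
  · have hAB : A j ∪ B j = Set.univ := (Finset.mem_filter.1 (hPfs hjP)).2
    have hup : uplusJA (A j) (B j) σA σB ∈ CM.aja (Sum.inl ()) (A j ∪ B j) :=
      uplus_mem_aja CM _ hσA hσB
    rw [hAB] at hup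
    have hupm : uplusJA (A j) (B j) σA σB ∈
        mkAja (cavail N (Option (ι × ℕ))) (Sum.inl ()) Set.univ := hup
    have hσAdom : ∀ a, (σA a).isSome ↔ a ∈ A j := CM.aja_dom _ _ σA hσA
    have ht1 := houtmem (uplusJA (A j) (B j) σA σB) (uplusJA (A j) (B j) σA σB) hupm
      (fun a x hx => hx)
    have ht2 := houtmem σA (uplusJA (A j) (B j) σA σB) hupm (subJA_uplus_left hσAdom)
    have hsφ := hφj _ ht2
    have hsψ := hψj _ ht1
    obtain ⟨k, hk⟩ := orootV_shape (PI \ P) C N pt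
      (fun a => ((uplusJA (A j) (B j) σA σB) a).bind (parseR N (Option (ι × ℕ))))
    have htk : co N (Option (ι × ℕ)) (orootV (PI \ P) C N pt) (Sum.inl ())
        (uplusJA (A j) (B j) σA σB) = Sum.inr ⟨k, pt k⟩ := by
      show Sum.inr (orootV (PI \ P) C N pt _) = _
      exact congrArg Sum.inr hk
    rw [htk] at hsφ hsψ
    have hkφ : satCAB (N k) (pt k) (φ j) := (htrans (φ j) k (pt k)).1 hsφ
    have hkψ : satCAB (N k) (pt k) (ψ j) := (htrans (ψ j) k (pt k)).1 hsψ
    exact hptΘ k ((sat_bigOr (N k) (pt k) _).2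
      ⟨FormCAB.and (φ j) (ψ j), List.mem_map.2 ⟨j, Finset.mem_toList.2 hjP, rfl⟩, hkφ, hkψ⟩)
  · have hj' : j ∈ PI \ P := Finset.mem_sdiff.2 ⟨hjPI, hjP⟩
    by_cases hAB : A j ∪ B j = Set.univ
    · have hσA' : σA ∈ mkAja (cavail N (Option (ι × ℕ))) (Sum.inl ()) (C j) := by
        rw [hCu j hAB]
        exact hσA
      obtain ⟨σ', hm, hsub, hco⟩ := steer (PI \ P) C N pt j hj' (hCne j hj') σA hσA'
      have ht : (Sum.inr ⟨some j, pt (some j)⟩ : CSt N) ∈ CM.out (Sum.inl ()) σA :=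
        ⟨σ', hm, hsub, hco.symm⟩
      exact hptφ j hj' hAB ((htrans (φ j) (some j) (pt (some j))).1 (hφj _ ht))
    · have hτ : uplusJA (A j) (B j) σA σB ∈ CM.aja (Sum.inl ()) (A j ∪ B j) :=
        uplus_mem_aja CM _ hσA hσB
      have hτ' : uplusJA (A j) (B j) σA σB ∈
          mkAja (cavail N (Option (ι × ℕ))) (Sum.inl ()) (C j) := by
        rw [hCnu j hAB]
        exact hτ
      obtain ⟨σ', hm, hsub, hco⟩ := steer (PI \ P) C N pt j hj' (hCne j hj') _ hτ'
      have hσAdom : ∀ a, (σA a).isSome ↔ a ∈ A j := CM.aja_dom _ _ σA hσA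
      have ht1 : (Sum.inr ⟨some j, pt (some j)⟩ : CSt N) ∈
          CM.out (Sum.inl ()) (uplusJA (A j) (B j) σA σB) := ⟨σ', hm, hsub, hco.symm⟩
      have ht2 : (Sum.inr ⟨some j, pt (some j)⟩ : CSt N) ∈ CM.out (Sum.inl ()) σA :=
        ⟨σ', hm, subJA_trans (subJA_uplus_left hσAdom) hsub, hco.symm⟩
      have hkφ := (htrans (φ j) (some j) (pt (some j))).1 (hφj _ ht2)
      have hkψ := (htrans (ψ j) (some j) (pt (some j))).1 (hψj _ ht1)
      exact hptψ j hj' hAB ⟨hkφ, hkψ⟩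
end

section
/- Second downward validity for CCSR_AB: let γ be an elementary disjunction, PI a finite index set, and for each j ∈ PI let A_j, B_j be coalitions and φ_j, ψ_j ∈ Φ_CCSR_AB, and let SD = γ ∨ ⋁_{j∈PI} ⟨A_j⟩φ_j⟨B_j⟩_c ψ_j. If ⊨ SD, then either (a) ⊨ γ, or (b) there exists a semantically well-arranged sequence of subsets of PI. -/
open scoped Classical

section SDVAux

/-! ### Generic helper lemmas -/

lemma satCAB_bigOr {Agt AP : Type} (M : CGM Agt AP) (s : M.St)
    (l : List (FormCAB Agt AP)) :
    satCAB M s (bigOrCAB l) ↔ ∃ χ ∈ l, satCAB M s χ := by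
  induction l with
  | nil => simp [bigOrCAB, satCAB]
  | cons a l ih => simp [bigOrCAB, satCAB, ih]

lemma satCAB_elem_lab {Agt AP : Type} {M M' : CGM Agt AP} {s : M.St} {s' : M'.St}
    (h : M.lab s = M'.lab s') {γ : FormCAB Agt AP} (hγ : IsElemDisjCAB γ) :
    satCAB M s γ ↔ satCAB M' s' γ := by
  induction hγ with
  | bot => simp [satCAB]
  | lit hl => cases hl <;> simp [satCAB, h]
  | or _ _ ih1 ih2 => simp [satCAB, ih1, ih2]

lemma not_validCAB_iff {Agt AP : Type} (χ : FormCAB Agt AP) :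
    ¬ validCAB χ ↔ ∃ (M : CGM Agt AP) (s : M.St), ¬ satCAB M s χ := by
  unfold validCAB; push_neg; exact Iff.rfl

namespace SDVC

variable {Agt AP I : Type} [Fintype Agt] [Nonempty Agt] [Fintype I] [Nonempty I]

instance : NeZero (Fintype.card I) := ⟨Fintype.card_ne_zero⟩

/-- Action type of the combined model. -/
abbrev CAct (N : I → CGM Agt AP) : Type := ZMod (Fintype.card I) × ∀ i, (N i).Act

noncomputable def fdef (N : I → CGM Agt AP) : ∀ i, (N i).Act :=
  fun i => Classical.choice (N i).act_ne

noncomputable def proj (N : I → CGM Agt AP) (i : I) (σ : Agt → Option (CAct N)) :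
    Agt → Option ((N i).Act) := fun a => (σ a).map fun x => x.2 i

noncomputable def lift (N : I → CGM Agt AP) (i : I) (τ : Agt → Option ((N i).Act)) :
    Agt → Option (CAct N) :=
  fun a => (τ a).map fun y => ((0 : ZMod (Fintype.card I)), Function.update (fdef N) i y)

lemma proj_lift (N : I → CGM Agt AP) (i : I) (τ : Agt → Option ((N i).Act)) :
    proj N i (lift N i τ) = τ := by
  funext a
  cases h : τ a <;> simp [proj, lift, h]

lemma isSome_proj (N : I → CGM Agt AP) (i : I) (σ : Agt → Option (CAct N)) (a : Agt) :
    ((proj N i σ a).isSome) = (σ a).isSome := by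
  cases h : σ a <;> simp [proj, h]

lemma isSome_lift (N : I → CGM Agt AP) (i : I) (τ : Agt → Option ((N i).Act)) (a : Agt) :
    ((lift N i τ a).isSome) = (τ a).isSome := by
  cases h : τ a <;> simp [lift, h]

noncomputable def vote (N : I → CGM Agt AP) (o : Option (CAct N)) :
    ZMod (Fintype.card I) := (o.map Prod.fst).getD 0

noncomputable def eIdx (I : Type) [Fintype I] [Nonempty I] :
    ZMod (Fintype.card I) ≃ I :=
  Fintype.equivOfCardEq (by rw [ZMod.card])

noncomputable def tgt (N : I → CGM Agt AP) (σ : Agt → Option (CAct N)) : I :=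
  eIdx I (∑ a, vote N (σ a))

/-- Any partial joint action can be completed to a full one hitting any target. -/
lemma exists_full_ext (N : I → CGM Agt AP) (σ : Agt → Option (CAct N))
    (a₀ : Agt) (h0 : σ a₀ = none) (i : I) :
    ∃ σ' : Agt → Option (CAct N),
      (∀ a, (σ' a).isSome) ∧ subJA σ σ' ∧ tgt N σ' = i := by
  classical
  set S : ZMod (Fintype.card I) := ∑ a, vote N (σ a) with hS
  refine ⟨fun a => if a = a₀ then some ((eIdx I).symm i - S, fdef N)
      else some ((σ a).getD (0, fdef N)), fun a => by by_cases h : a = a₀ <;> simp [h],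
      ?_, ?_⟩
  · intro a x hx
    have : a ≠ a₀ := by rintro rfl; rw [h0] at hx; cases hx
    simp [this, hx]
  · have hv : ∀ a, a ≠ a₀ →
        vote N (some ((σ a).getD ((0 : ZMod (Fintype.card I)), fdef N))) = vote N (σ a) := by
      intro a _; cases h : σ a <;> simp [vote, h]
    have hsum : (∑ a, vote N (if a = a₀ then some ((eIdx I).symm i - S, fdef N)
        else some ((σ a).getD (0, fdef N)))) = (eIdx I).symm i := by
      rw [← Finset.add_sum_erase _ _ (Finset.mem_univ a₀)]
      have : ∑ a ∈ Finset.univ.erase a₀,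
          vote N (if a = a₀ then some ((eIdx I).symm i - S, fdef N)
            else some ((σ a).getD (0, fdef N)))
          = ∑ a ∈ Finset.univ.erase a₀, vote N (σ a) := by
        refine Finset.sum_congr rfl fun a ha => ?_
        have hne : a ≠ a₀ := (Finset.mem_erase.mp ha).1
        rw [if_neg hne, hv a hne]
      rw [this]
      have : ∑ a ∈ Finset.univ.erase a₀, vote N (σ a) = S := by
        rw [hS, ← Finset.add_sum_erase _ _ (Finset.mem_univ a₀)]
        simp [vote, h0]
      rw [this]
      simp [vote]
    unfold tgt
    rw [hsum]
    simp

set_option linter.unusedSectionVars false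

variable (N : I → CGM Agt AP) (t : ∀ i, (N i).St) (lr : Set AP)

/-- States of the combined model: `none` is the root. -/
abbrev CSt (N : I → CGM Agt AP) : Type := Option (Σ i, (N i).St)

noncomputable def cAja : CSt N → Set Agt → Set (Agt → Option (CAct N))
  | none, A => {σ | ∀ a, (σ a).isSome ↔ a ∈ A}
  | some ⟨i, u⟩, A => {σ | (∀ a, (σ a).isSome ↔ a ∈ A) ∧ proj N i σ ∈ (N i).aja u A}

noncomputable def cOut : CSt N → (Agt → Option (CAct N)) → Set (CSt N)
  | none, σ => if (∀ a, (σ a).isSome) then {some ⟨tgt N σ, t (tgt N σ)⟩}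
      else {w | ∃ i, w = some ⟨i, t i⟩}
  | some ⟨i, u⟩, σ => {w | ∃ u' ∈ (N i).out u (proj N i σ), w = some ⟨i, u'⟩}

noncomputable def cLab : CSt N → Set AP
  | none => lr
  | some ⟨i, u⟩ => (N i).lab u

lemma cAja_ne : ∀ (s : CSt N) (A : Set Agt), (cAja N s A).Nonempty := by
  rintro (_ | ⟨i, u⟩) A
  · exact ⟨fun a => if a ∈ A then some (0, fdef N) else none,
      fun a => by by_cases h : a ∈ A <;> simp [h]⟩
  · obtain ⟨τ, hτ⟩ := (N i).aja_ne u A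
    refine ⟨lift N i τ, fun a => ?_, by rw [proj_lift]; exact hτ⟩
    rw [isSome_lift]
    exact (N i).aja_dom u A τ hτ a

lemma cAja_dom : ∀ (s : CSt N) (A : Set Agt), ∀ σ ∈ cAja N s A,
    ∀ a, (σ a).isSome ↔ a ∈ A := by
  rintro (_ | ⟨i, u⟩) A σ hσ a
  · exact hσ a
  · exact hσ.1 a

lemma proj_restrict (i : I) (σ : Agt → Option (CAct N)) (C : Set Agt) :
    proj N i (restrictJA σ C) = restrictJA (proj N i σ) C := by
  funext a
  by_cases h : a ∈ C <;> simp [proj, restrictJA, h]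

lemma cAja_glue : ∀ (s : CSt N) (A : Set Agt) (σ : Agt → Option (CAct N)), A.Nonempty →
    (∀ a, (σ a).isSome ↔ a ∈ A) →
    (σ ∈ cAja N s A ↔ ∀ a ∈ A, restrictJA σ {a} ∈ cAja N s {a}) := by
  have hdom1 : ∀ (σ : Agt → Option (CAct N)) (A : Set Agt), (∀ a, (σ a).isSome ↔ a ∈ A) →
      ∀ a ∈ A, ∀ b, ((restrictJA σ {a} b).isSome ↔ b ∈ ({a} : Set Agt)) := by
    intro σ A hdom a ha b
    by_cases h : b ∈ ({a} : Set Agt)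
    · have hb : b = a := h
      subst hb
      simp [restrictJA, (hdom b).mpr ha]
    · simp [restrictJA, if_neg h, h]
  rintro (_ | ⟨i, u⟩) A σ hA hdom
  · simp only [cAja, Set.mem_setOf_eq]
    exact ⟨fun _ a ha => hdom1 σ A hdom a ha, fun _ => hdom⟩
  · simp only [cAja, Set.mem_setOf_eq]
    have hpd : ∀ a, ((proj N i σ) a).isSome ↔ a ∈ A := by
      intro a; rw [isSome_proj]; exact hdom a
    constructor
    · rintro ⟨-, hp⟩ a ha
      refine ⟨hdom1 σ A hdom a ha, ?_⟩
      rw [proj_restrict]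
      exact (((N i).aja_glue u A (proj N i σ) hA hpd).mp hp) a ha
    · intro h
      refine ⟨hdom, ((N i).aja_glue u A (proj N i σ) hA hpd).mpr ?_⟩
      intro a ha
      have := (h a ha).2
      rwa [proj_restrict] at this

lemma cOut_univ : ∀ (s : CSt N), ∀ σ ∈ cAja N s Set.univ,
    ∃ w, cOut N t s σ = {w} := by
  rintro (_ | ⟨i, u⟩) σ hσ
  · have hfull : ∀ a, (σ a).isSome := fun a => (hσ a).mpr (Set.mem_univ a)
    exact ⟨some ⟨tgt N σ, t (tgt N σ)⟩, by simp [cOut, if_pos hfull]⟩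
  · obtain ⟨t', ht'⟩ := (N i).out_univ u (proj N i σ) hσ.2
    refine ⟨some ⟨i, t'⟩, ?_⟩
    ext w
    simp [cOut, ht']

lemma cOut_univ_not : ∀ (s : CSt N) (σ : Agt → Option (CAct N)), (∀ a, (σ a).isSome) →
    σ ∉ cAja N s Set.univ → cOut N t s σ = ∅ := by
  rintro (_ | ⟨i, u⟩) σ hfull hσ
  · exact absurd (fun a => by simp [hfull a]) hσ
  · have hout := (N i).out_univ_not u (proj N i σ)
      (fun a => by rw [isSome_proj]; exact hfull a)
      (fun hc => hσ ⟨fun a => by simp [hfull a], hc⟩)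
    ext w
    simp [cOut, hout]

lemma cOut_not : ∀ (s : CSt N) (A : Set Agt) (σ : Agt → Option (CAct N)),
    (∀ a, (σ a).isSome ↔ a ∈ A) → A ≠ Set.univ → σ ∉ cAja N s A →
    cOut N t s σ = ∅ := by
  rintro (_ | ⟨i, u⟩) A σ hdom hA hσ
  · exact absurd hdom hσ
  · have hout := (N i).out_not u A (proj N i σ)
      (fun a => by rw [isSome_proj]; exact hdom a) hA
      (fun hc => hσ ⟨hdom, hc⟩)
    ext w
    simp [cOut, hout]

noncomputable def liftExt (i : I) (σ : Agt → Option (CAct N))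
    (τ' : Agt → Option ((N i).Act)) : Agt → Option (CAct N) :=
  fun a => if (σ a).isSome then σ a
    else (τ' a).map fun y => ((0 : ZMod (Fintype.card I)), Function.update (fdef N) i y)

lemma subJA_liftExt (i : I) (σ : Agt → Option (CAct N)) (τ' : Agt → Option ((N i).Act)) :
    subJA σ (liftExt N i σ τ') := by
  intro a x hx
  simp [liftExt, hx]

lemma liftExt_isSome (i : I) (σ : Agt → Option (CAct N)) (τ' : Agt → Option ((N i).Act))
    (hfull : ∀ a, (τ' a).isSome) (a : Agt) : ((liftExt N i σ τ' a).isSome) := by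
  unfold liftExt
  by_cases h : (σ a).isSome
  · simpa [h] using h
  · simpa [h] using hfull a

lemma proj_liftExt (i : I) (σ : Agt → Option (CAct N)) (τ' : Agt → Option ((N i).Act))
    (hsub : subJA (proj N i σ) τ') : proj N i (liftExt N i σ τ') = τ' := by
  funext a
  cases hσ : σ a with
  | some x =>
      have : τ' a = some (x.2 i) := hsub a (x.2 i) (by simp [proj, hσ])
      simp [proj, liftExt, hσ, this]
  | none =>
      cases hτ : τ' a <;> simp [proj, liftExt, hσ, hτ]

lemma subJA_proj (i : I) (σ σ' : Agt → Option (CAct N)) (hsub : subJA σ σ') :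
    subJA (proj N i σ) (proj N i σ') := by
  intro a y hy
  rcases Option.map_eq_some_iff.mp hy with ⟨x, hx, rfl⟩
  simp [proj, hsub a x hx]

lemma cOut_glue : ∀ (s : CSt N) (A : Set Agt), A ≠ Set.univ → ∀ σ ∈ cAja N s A,
    cOut N t s σ = {w | ∃ σ' ∈ cAja N s Set.univ, subJA σ σ' ∧ w ∈ cOut N t s σ'} := by
  rintro (_ | ⟨i, u⟩) A hA σ hσ
  · obtain ⟨a₀, ha₀⟩ := Set.ne_univ_iff_exists_notMem A |>.mp hA
    have hnone : σ a₀ = none := by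
      rw [← Option.not_isSome_iff_eq_none]
      intro hc
      exact ha₀ ((hσ a₀).mp hc)
    have hnotfull : ¬ ∀ a, (σ a).isSome := fun hc => by
      have := hc a₀; rw [hnone] at this; simp at this
    have hL : cOut N t none σ = {w | ∃ i, w = some ⟨i, t i⟩} := by
      simp only [cOut, if_neg hnotfull]
    rw [hL]
    ext w
    simp only [Set.mem_setOf_eq]
    constructor
    · rintro ⟨i, rfl⟩
      obtain ⟨σ', hfull, hsub, htgt⟩ := exists_full_ext N σ a₀ hnone i
      refine ⟨σ', fun a => by simp [hfull a], hsub, ?_⟩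
      subst htgt
      simp [cOut, if_pos hfull]
    · rintro ⟨σ', hσ', hsub, hw⟩
      have hfull : ∀ a, (σ' a).isSome := fun a => (hσ' a).mpr (Set.mem_univ a)
      simp only [cOut, if_pos hfull, Set.mem_singleton_iff] at hw
      exact ⟨tgt N σ', hw⟩
  · have hp : proj N i σ ∈ (N i).aja u A := hσ.2
    have Nglue := (N i).out_glue u A hA (proj N i σ) hp
    ext w
    simp only [cOut, Set.mem_setOf_eq]
    constructor
    · rintro ⟨u', hu', rfl⟩
      rw [Nglue] at hu'
      obtain ⟨τ', hτ', hsubτ, hu'⟩ := hu'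
      have hτfull : ∀ a, (τ' a).isSome :=
        fun a => ((N i).aja_dom u Set.univ τ' hτ' a).mpr (Set.mem_univ a)
      have hproj : proj N i (liftExt N i σ τ') = τ' := proj_liftExt N i σ τ' hsubτ
      refine ⟨liftExt N i σ τ', ⟨fun a => ?_, by rw [hproj]; exact hτ'⟩,
        subJA_liftExt N i σ τ', ⟨u', by rw [hproj]; exact hu', rfl⟩⟩
      simp [liftExt_isSome N i σ τ' hτfull a]
    · rintro ⟨σ', hσ', hsub, u', hu', rfl⟩
      refine ⟨u', ?_, rfl⟩
      rw [Nglue]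
      exact ⟨proj N i σ', hσ'.2, subJA_proj N i σ σ' hsub, hu'⟩

/-- The combined model. -/
noncomputable def combo : CGM Agt AP where
  St := CSt N
  Act := CAct N
  st_ne := ⟨none⟩
  act_ne := ⟨(0, fdef N)⟩
  aja := cAja N
  out := cOut N t
  lab := cLab N lr
  aja_ne := cAja_ne N
  aja_dom := cAja_dom N
  aja_glue := cAja_glue N
  out_univ := cOut_univ N t
  out_univ_not := cOut_univ_not N t
  out_glue := cOut_glue N t
  out_not := cOut_not N t

lemma proj_uplus (i : I) (A B : Set Agt) (σA σB : Agt → Option (CAct N)) :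
    proj N i (uplusJA A B σA σB) = uplusJA A B (proj N i σA) (proj N i σB) := by
  funext a
  unfold proj uplusJA
  split_ifs <;> rfl

/-- Truth lemma for non-root states of the combined model. -/
lemma combo_truth (i : I) (χ : FormCAB Agt AP) : ∀ u : (N i).St,
    satCAB (combo N t lr) (some ⟨i, u⟩ : CSt N) χ ↔ satCAB (N i) u χ := by
  induction χ with
  | top => intro u; exact Iff.rfl
  | bot => intro u; exact Iff.rfl
  | atom p => intro u; exact Iff.rfl
  | natom p => intro u; exact Iff.rfl
  | and φ ψ ih1 ih2 =>
      intro u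
      exact and_congr (ih1 u) (ih2 u)
  | or φ ψ ih1 ih2 =>
      intro u
      exact or_congr (ih1 u) (ih2 u)
  | cdia A B φ ψ ih1 ih2 =>
      intro u
      constructor
      · rintro ⟨σA, hA, hφ, σB, hB, hψ⟩
        have hA' : σA ∈ cAja N (some ⟨i, u⟩ : CSt N) A := hA
        have hB' : σB ∈ cAja N (some ⟨i, u⟩ : CSt N) B := hB
        refine ⟨proj N i σA, hA'.2, ?_, proj N i σB, hB'.2, ?_⟩
        · intro u' hu'
          exact (ih1 u').mp (hφ (some ⟨i, u'⟩ : CSt N) ⟨u', hu', rfl⟩)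
        · intro u' hu'
          refine (ih2 u').mp (hψ (some ⟨i, u'⟩ : CSt N) ⟨u', ?_, rfl⟩)
          exact (congrArg (fun σ => u' ∈ (N i).out u σ) (proj_uplus N i A B σA σB)).mpr hu'
      · rintro ⟨τA, hτA, hφ, τB, hτB, hψ⟩
        have domlift : ∀ (C : Set Agt) (τ : Agt → Option ((N i).Act)),
            τ ∈ (N i).aja u C → ∀ a, ((lift N i τ a).isSome ↔ a ∈ C) := by
          intro C τ hτ a
          rw [isSome_lift]
          exact (N i).aja_dom u C τ hτ a
        refine ⟨lift N i τA, (⟨domlift A τA hτA, by rw [proj_lift]; exact hτA⟩ :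
            lift N i τA ∈ cAja N (some ⟨i, u⟩ : CSt N) A), ?_, lift N i τB,
            (⟨domlift B τB hτB, by rw [proj_lift]; exact hτB⟩ :
            lift N i τB ∈ cAja N (some ⟨i, u⟩ : CSt N) B), ?_⟩
        · rintro w ⟨u', hu', rfl⟩
          rw [proj_lift] at hu'
          exact (ih1 u').mpr (hφ u' hu')
        · rintro w ⟨u', hu', rfl⟩
          have e : proj N i (uplusJA A B (lift N i τA) (lift N i τB)) = uplusJA A B τA τB := by
            rw [proj_uplus, proj_lift, proj_lift]
          replace hu' := (congrArg (fun σ => u' ∈ (N i).out u σ) e).mp hu'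
          exact (ih2 u').mpr (hψ u' hu')

lemma combo_out_root_full (σ : Agt → Option (CAct N)) (h : ∀ a, (σ a).isSome) :
    cOut N t none σ = {(some ⟨tgt N σ, t (tgt N σ)⟩ : CSt N)} := by
  simp only [cOut, if_pos h]

lemma combo_out_root_nonfull (σ : Agt → Option (CAct N)) (h : ¬ ∀ a, (σ a).isSome) :
    cOut N t none σ = {w : CSt N | ∃ i, w = some ⟨i, t i⟩} := by
  simp only [cOut, if_neg h]

end SDVC

end SDVAux


section SDVMain

open SDVC

set_option linter.unusedSectionVars false

variable {Agt AP : Type} [Fintype Agt] [Nonempty Agt]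
variable {ι : Type} [DecidableEq ι]

lemma satCAB_bigOr_finset (M : CGM Agt AP) (s : M.St) (Q : Finset ι)
    (f : ι → FormCAB Agt AP) :
    satCAB M s (bigOrCAB (Q.toList.map f)) ↔ ∃ j ∈ Q, satCAB M s (f j) := by
  rw [satCAB_bigOr]
  constructor
  · rintro ⟨χ, hχ, hs⟩
    rcases List.mem_map.mp hχ with ⟨j, hj, rfl⟩
    exact ⟨j, Finset.mem_toList.mp hj, hs⟩
  · rintro ⟨j, hj, hs⟩
    exact ⟨f j, List.mem_map.mpr ⟨j, Finset.mem_toList.mpr hj, rfl⟩, hs⟩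

/-- The combined model refutes all the diamonds at its root. -/
lemma combo_refutes (PI : Finset ι) (A B : ι → Set Agt) (φ ψ : ι → FormCAB Agt AP)
    (Q : Finset ι)
    (hfQ : PI.filter (fun j => A j = Set.univ) ⊆ Q)
    (hQfs : Q ⊆ PI.filter (fun j => A j ∪ B j = Set.univ))
    (I' : Type) [Fintype I'] [Nonempty I']
    (N : I' → CGM Agt AP) (t : ∀ i, (N i).St) (lr : Set AP)
    (hpt : ∀ i, ∀ k ∈ Q, ¬ satCAB (N i) (t i) (FormCAB.and (φ k) (ψ k)))
    (hw : ∀ j, (hj : j ∈ PI \ Q) → ∃ i : I',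
      ¬ satCAB (N i) (t i) (φ j) ∨ (A j ∪ B j ≠ Set.univ ∧ ¬ satCAB (N i) (t i) (ψ j))) :
    ∀ j ∈ PI, ¬ satCAB (combo N t lr) (none : CSt N)
      (FormCAB.cdia (A j) (B j) (φ j) (ψ j)) := by
  intro j hj hsat
  obtain ⟨σA, hA, hφ, σB, hB, hψ⟩ := hsat
  have hdA : ∀ a, (σA a).isSome ↔ a ∈ A j := hA
  have hdB : ∀ a, (σB a).isSome ↔ a ∈ B j := hB
  have hdU : ∀ a, ((uplusJA (A j) (B j) σA σB) a).isSome ↔ a ∈ A j ∪ B j := by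
    intro a
    unfold uplusJA
    by_cases hA' : a ∈ A j
    · simp [hA', hdA a]
    · by_cases hB' : a ∈ B j <;> simp [hA', hB', hdA a, hdB a]
  by_cases hjQ : j ∈ Q
  · have hAB : A j ∪ B j = Set.univ := (Finset.mem_filter.mp (hQfs hjQ)).2
    have hUfull : ∀ a, ((uplusJA (A j) (B j) σA σB) a).isSome := by
      intro a
      rw [hdU a, hAB]
      exact Set.mem_univ a
    set istar := tgt N (uplusJA (A j) (B j) σA σB) with histar
    have hψ' : satCAB (N istar) (t istar) (ψ j) := by
      refine (combo_truth N t lr istar (ψ j) (t istar)).mp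
        (hψ (some ⟨istar, t istar⟩ : CSt N) ?_)
      show _ ∈ cOut N t none _
      rw [combo_out_root_full N t _ hUfull]
      rfl
    have hmem : (some ⟨istar, t istar⟩ : CSt N) ∈ cOut N t none σA := by
      by_cases hAu : A j = Set.univ
      · have hUA : uplusJA (A j) (B j) σA σB = σA := by
          funext a
          have : a ∈ A j := by rw [hAu]; exact Set.mem_univ a
          simp [uplusJA, this]
        rw [← hUA, combo_out_root_full N t _ hUfull]
        rfl
      · have hAnf : ¬ ∀ a, (σA a).isSome := by
          obtain ⟨a, ha⟩ := (Set.ne_univ_iff_exists_notMem _).mp hAu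
          intro hc
          exact ha ((hdA a).mp (hc a))
        rw [combo_out_root_nonfull N t _ hAnf]
        exact ⟨istar, rfl⟩
    have hφ' : satCAB (N istar) (t istar) (φ j) :=
      (combo_truth N t lr istar (φ j) (t istar)).mp (hφ _ hmem)
    exact hpt istar j hjQ ⟨hφ', hψ'⟩
  · have hjPQ : j ∈ PI \ Q := Finset.mem_sdiff.mpr ⟨hj, hjQ⟩
    obtain ⟨i0, hi0⟩ := hw j hjPQ
    have hAnu : A j ≠ Set.univ := by
      intro hc
      exact hjQ (hfQ (Finset.mem_filter.mpr ⟨hj, hc⟩))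
    have hAnf : ¬ ∀ a, (σA a).isSome := by
      obtain ⟨a, ha⟩ := (Set.ne_univ_iff_exists_notMem _).mp hAnu
      intro hc
      exact ha ((hdA a).mp (hc a))
    have hmemA : (some ⟨i0, t i0⟩ : CSt N) ∈ cOut N t none σA := by
      rw [combo_out_root_nonfull N t _ hAnf]
      exact ⟨i0, rfl⟩
    have hφ' : satCAB (N i0) (t i0) (φ j) :=
      (combo_truth N t lr i0 (φ j) (t i0)).mp (hφ _ hmemA)
    rcases hi0 with hnφ | ⟨hABn, hnψ⟩
    · exact hnφ hφ'
    · have hUnf : ¬ ∀ a, ((uplusJA (A j) (B j) σA σB) a).isSome := by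
        obtain ⟨a, ha⟩ := (Set.ne_univ_iff_exists_notMem _).mp hABn
        intro hc
        exact ha ((hdU a).mp (hc a))
      have hmemU : (some ⟨i0, t i0⟩ : CSt N) ∈ cOut N t none (uplusJA (A j) (B j) σA σB) := by
        refine (congrArg (fun S => (some ⟨i0, t i0⟩ : CSt N) ∈ S)
          (combo_out_root_nonfull N t _ hUnf)).mpr ?_
        exact ⟨i0, rfl⟩
      exact hnψ ((combo_truth N t lr i0 (ψ j) (t i0)).mp (hψ _ hmemU))

/-- Endgame: the combined model contradicts validity of the standard disjunction. -/
lemma sdv_contra (γ : FormCAB Agt AP) (hγd : IsElemDisjCAB γ)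
    (PI : Finset ι) (A B : ι → Set Agt) (φ ψ : ι → FormCAB Agt AP)
    (hval : validCAB (FormCAB.or γ
      (bigOrCAB (PI.toList.map fun j => FormCAB.cdia (A j) (B j) (φ j) (ψ j)))))
    (Q : Finset ι)
    (hfQ : PI.filter (fun j => A j = Set.univ) ⊆ Q)
    (hQfs : Q ⊆ PI.filter (fun j => A j ∪ B j = Set.univ))
    (I' : Type) [Fintype I'] [Nonempty I']
    (N : I' → CGM Agt AP) (t : ∀ i, (N i).St) (lr : Set AP)
    (hglab : ∃ (Mg : CGM Agt AP) (sg : Mg.St), Mg.lab sg = lr ∧ ¬ satCAB Mg sg γ)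
    (hpt : ∀ i, ∀ k ∈ Q, ¬ satCAB (N i) (t i) (FormCAB.and (φ k) (ψ k)))
    (hw : ∀ j, (hj : j ∈ PI \ Q) → ∃ i : I',
      ¬ satCAB (N i) (t i) (φ j) ∨ (A j ∪ B j ≠ Set.univ ∧ ¬ satCAB (N i) (t i) (ψ j))) :
    False := by
  have hdia := combo_refutes PI A B φ ψ Q hfQ hQfs I' N t lr hpt hw
  obtain ⟨Mg, sg, hlr, hg⟩ := hglab
  have hroot := hval (combo N t lr) (none : CSt N)
  rcases hroot with hγs | hds
  · have hlab : (combo N t lr).lab (none : CSt N) = Mg.lab sg := hlr.symm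
    exact hg ((satCAB_elem_lab hlab hγd).mp hγs)
  · replace hds := (satCAB_bigOr_finset (combo N t lr) (none : CSt N) PI _).mp hds
    obtain ⟨j, hj, hsat⟩ := hds
    exact hdia j hj hsat

/-- The key claim: a semantic expansion step is always possible. -/
lemma sdv_claim (γ : FormCAB Agt AP) (hγd : IsElemDisjCAB γ)
    (PI : Finset ι) (A B : ι → Set Agt) (φ ψ : ι → FormCAB Agt AP)
    (hval : validCAB (FormCAB.or γ
      (bigOrCAB (PI.toList.map fun j => FormCAB.cdia (A j) (B j) (φ j) (ψ j)))))
    (hγv : ¬ validCAB γ) (Q : Finset ι)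
    (hfQ : PI.filter (fun j => A j = Set.univ) ⊆ Q)
    (hQfs : Q ⊆ PI.filter (fun j => A j ∪ B j = Set.univ))
    (hQ : ¬ validCAB (bigOrCAB (Q.toList.map fun j => FormCAB.and (φ j) (ψ j)))) :
    ∃ j' ∈ PI \ Q,
      validCAB (FormCAB.or
        (bigOrCAB (Q.toList.map fun j => FormCAB.and (φ j) (ψ j))) (φ j')) ∧
      (A j' ∪ B j' = Set.univ ∨
        validCAB (bigOrCAB ((insert j' Q).toList.map fun j =>
          FormCAB.and (φ j) (ψ j)))) := by
  by_contra hcon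
  push_neg at hcon
  -- witnesses for each j ∈ PI \ Q
  have hwit : ∀ j : {j // j ∈ PI \ Q}, ∃ (M : CGM Agt AP) (s : M.St),
      (∀ k ∈ Q, ¬ satCAB M s (FormCAB.and (φ k) (ψ k))) ∧
      (¬ satCAB M s (φ j.1) ∨
        (A j.1 ∪ B j.1 ≠ Set.univ ∧ ¬ satCAB M s (ψ j.1))) := by
    rintro ⟨j, hj⟩
    by_cases hv : validCAB (FormCAB.or
        (bigOrCAB (Q.toList.map fun k => FormCAB.and (φ k) (ψ k))) (φ j))
    · obtain ⟨hABn, hni⟩ := hcon j hj hv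
      rw [not_validCAB_iff] at hni
      obtain ⟨M, s, hs⟩ := hni
      rw [satCAB_bigOr_finset] at hs
      push_neg at hs
      refine ⟨M, s, fun k hk => hs k (Finset.mem_insert_of_mem hk), ?_⟩
      have hthis := hs j (Finset.mem_insert_self j Q)
      rcases not_and_or.mp hthis with h | h
      · exact Or.inl h
      · exact Or.inr ⟨hABn, h⟩
    · rw [not_validCAB_iff] at hv
      obtain ⟨M, s, hs⟩ := hv
      have hs1 : ¬ satCAB M s (bigOrCAB (Q.toList.map fun k => FormCAB.and (φ k) (ψ k))) :=
        fun hc => hs (Or.inl hc)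
      have hs2 : ¬ satCAB M s (φ j) := fun hc => hs (Or.inr hc)
      rw [satCAB_bigOr_finset] at hs1
      push_neg at hs1
      exact ⟨M, s, hs1, Or.inl hs2⟩
  choose MW sW hW1 hW2 using hwit
  rw [not_validCAB_iff] at hQ hγv
  obtain ⟨M0, s0, h0⟩ := hQ
  obtain ⟨Mg, sg, hg⟩ := hγv
  rw [satCAB_bigOr_finset] at h0
  push_neg at h0
  -- assemble the combined model
  exact sdv_contra γ hγd PI A B φ ψ hval Q hfQ hQfs (Option {j // j ∈ PI \ Q})
    (fun i => Option.rec M0 (fun x => MW x) i)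
    (fun i => Option.rec s0 (fun x => sW x) i) (Mg.lab sg)
    ⟨Mg, sg, rfl, hg⟩
    (by rintro (_ | x) k hk
        · exact h0 k hk
        · exact hW1 x k hk)
    (by intro j hj
        exact ⟨some ⟨j, hj⟩, hW2 ⟨j, hj⟩⟩)

/-- Greedy construction of the semantically well-arranged sequence. -/
lemma sdv_key (γ : FormCAB Agt AP) (hγd : IsElemDisjCAB γ)
    (PI : Finset ι) (A B : ι → Set Agt) (φ ψ : ι → FormCAB Agt AP)
    (hval : validCAB (FormCAB.or γ
      (bigOrCAB (PI.toList.map fun j => FormCAB.cdia (A j) (B j) (φ j) (ψ j)))))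
    (hγv : ¬ validCAB γ) :
    ∀ (m : ℕ) (Q : Finset ι), PI.filter (fun j => A j = Set.univ) ⊆ Q →
      Q ⊆ PI.filter (fun j => A j ∪ B j = Set.univ) → PI.card - Q.card ≤ m →
      ∃ (L : ℕ) (P : ℕ → Finset ι),
        P 0 = Q ∧ (∀ k ≤ L, P k ⊆ PI) ∧
        (∀ k < L, PI.filter (fun j => A j = Set.univ) ⊆ P k ∧
          P k ⊆ PI.filter (fun j => A j ∪ B j = Set.univ)) ∧
        (∀ k < L, ∃ j' ∈ PI \ P k,
          validCAB (FormCAB.or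
            (bigOrCAB ((P k).toList.map fun j => FormCAB.and (φ j) (ψ j)))
            (φ j')) ∧
          P (k + 1) = insert j' (P k)) ∧
        validCAB (bigOrCAB ((P L).toList.map fun j => FormCAB.and (φ j) (ψ j))) := by
  intro m
  induction m with
  | zero =>
      intro Q hfQ hQfs hcard
      by_cases hQv : validCAB (bigOrCAB (Q.toList.map fun j => FormCAB.and (φ j) (ψ j)))
      · exact ⟨0, fun _ => Q, rfl, fun k _ => hQfs.trans (Finset.filter_subset _ _),
          fun k hk => absurd hk (by omega), fun k hk => absurd hk (by omega), hQv⟩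
      · exfalso
        obtain ⟨j', hj', -, -⟩ := sdv_claim γ hγd PI A B φ ψ hval hγv Q hfQ hQfs hQv
        have hQPI : Q ⊆ PI := hQfs.trans (Finset.filter_subset _ _)
        have : PI = Q := (Finset.eq_of_subset_of_card_le hQPI (by omega)).symm
        rw [this] at hj'
        simp at hj'
  | succ m ih =>
      intro Q hfQ hQfs hcard
      by_cases hQv : validCAB (bigOrCAB (Q.toList.map fun j => FormCAB.and (φ j) (ψ j)))
      · exact ⟨0, fun _ => Q, rfl, fun k _ => hQfs.trans (Finset.filter_subset _ _),
          fun k hk => absurd hk (by omega), fun k hk => absurd hk (by omega), hQv⟩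
      · obtain ⟨j', hj', hvor, hcase⟩ := sdv_claim γ hγd PI A B φ ψ hval hγv Q hfQ hQfs hQv
        have hjPI : j' ∈ PI := (Finset.mem_sdiff.mp hj').1
        have hjQ : j' ∉ Q := (Finset.mem_sdiff.mp hj').2
        have hQPI : Q ⊆ PI := hQfs.trans (Finset.filter_subset _ _)
        rcases hcase with hABu | hvins
        · -- recurse with insert j' Q
          have hcard' : PI.card - (insert j' Q).card ≤ m := by
            rw [Finset.card_insert_of_notMem hjQ]
            omega
          obtain ⟨L', P', hP0, hPI', hinv', hexp', hfin'⟩ := ih (insert j' Q)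
            (hfQ.trans (Finset.subset_insert _ _))
            (Finset.insert_subset (Finset.mem_filter.mpr ⟨hjPI, hABu⟩) hQfs) hcard'
          refine ⟨L' + 1, fun k => if k = 0 then Q else P' (k - 1), if_pos rfl,
            ?_, ?_, ?_, ?_⟩
          · intro k hk
            by_cases h0 : k = 0
            · simp only [if_pos h0]
              exact hQPI
            · simp only [if_neg h0]
              exact hPI' (k - 1) (by omega)
          · intro k hk
            by_cases h0 : k = 0
            · simp only [if_pos h0]
              exact ⟨hfQ, hQfs⟩
            · simp only [if_neg h0]
              exact hinv' (k - 1) (by omega)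
          · intro k hk
            by_cases h0 : k = 0
            · subst h0
              refine ⟨j', ?_, ?_, ?_⟩
              · simpa using hj'
              · simpa using hvor
              · simp [hP0]
            · simp only [if_neg h0, if_neg (by omega : ¬ k + 1 = 0)]
              obtain ⟨j'', hj'', hv'', hP''⟩ := hexp' (k - 1) (by omega)
              refine ⟨j'', hj'', hv'', ?_⟩
              have : k + 1 - 1 = (k - 1) + 1 := by omega
              rw [this, hP'']
          · simp only [if_neg (by omega : ¬ L' + 1 = 0)]
            simpa using hfin'
        · -- terminate in one step
          refine ⟨1, fun k => if k = 0 then Q else insert j' Q, if_pos rfl, ?_, ?_, ?_, ?_⟩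
          · intro k hk
            by_cases h0 : k = 0
            · simp only [if_pos h0]; exact hQPI
            · simp only [if_neg h0]
              exact Finset.insert_subset hjPI hQPI
          · intro k hk
            have h0 : k = 0 := by omega
            subst h0
            simp only [if_pos rfl]
            exact ⟨hfQ, hQfs⟩
          · intro k hk
            have h0 : k = 0 := by omega
            subst h0
            refine ⟨j', ?_, ?_, ?_⟩
            · simpa using hj'
            · simpa using hvor
            · simp
          · simpa using hvins


end SDVMain


/-- Second downward validity for CCSR_AB. If the standard disjunction
γ ∨ ⋁_{j∈PI}⟨A_j⟩φ_j⟨B_j⟩_c ψ_j is valid, then γ is valid or there exists a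
semantically well-arranged sequence (P k)_{0 ≤ k ≤ L} of subsets of PI. -/
theorem second_downward_validity_CCSR_AB
    {Agt AP : Type} [Fintype Agt] [Nonempty Agt] [Countable AP]
    {ι : Type} [DecidableEq ι]
    (γ : FormCAB Agt AP) (hγ : IsElemDisjCAB γ)
    (PI : Finset ι) (A B : ι → Set Agt) (φ ψ : ι → FormCAB Agt AP)
    (hval : validCAB (FormCAB.or γ
      (bigOrCAB (PI.toList.map fun j => FormCAB.cdia (A j) (B j) (φ j) (ψ j))))) :
    validCAB γ ∨
      ∃ (L : ℕ) (P : ℕ → Finset ι),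
        (∀ k ≤ L, P k ⊆ PI) ∧
        P 0 = (PI.filter fun j => A j = Set.univ) ∧
        (∀ k < L, (PI.filter fun j => A j = Set.univ) ⊆ P k ∧
          P k ⊆ (PI.filter fun j => A j ∪ B j = Set.univ)) ∧
        (∀ k < L, ∃ j' ∈ PI \ P k,
          validCAB (FormCAB.or
            (bigOrCAB ((P k).toList.map fun j => FormCAB.and (φ j) (ψ j)))
            (φ j')) ∧
          P (k + 1) = insert j' (P k)) ∧
        validCAB (bigOrCAB ((P L).toList.map fun j => FormCAB.and (φ j) (ψ j))) := by
  by_cases hγv : validCAB γ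
  · exact Or.inl hγv
  · right
    have hsub : PI.filter (fun j => A j = Set.univ) ⊆
        PI.filter (fun j => A j ∪ B j = Set.univ) := by
      intro j hj
      rcases Finset.mem_filter.mp hj with ⟨hj1, hj2⟩
      exact Finset.mem_filter.mpr ⟨hj1, by rw [hj2, Set.univ_union]⟩
    obtain ⟨L, P, hP0, hPI, hinv, hexp, hfin⟩ := sdv_key γ hγ PI A B φ ψ hval hγv
      PI.card (PI.filter (fun j => A j = Set.univ)) subset_rfl hsub (Nat.sub_le _ _)
    exact ⟨L, P, hPI, hP0, hinv, hexp, hfin⟩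
end

section
/- Upward derivability for CCSR_AB: let γ be an elementary disjunction, PI a finite index set, and for each j ∈ PI let A_j, B_j be coalitions and φ_j, ψ_j ∈ Φ_CCSR_AB, and let SD = γ ∨ ⋁_{j∈PI} ⟨A_j⟩φ_j⟨B_j⟩_c ψ_j. If either (a) ⊢_CCSR_AB γ, or (b) there exists a syntactically well-arranged sequence of subsets of PI, then ⊢_CCSR_AB SD. -/
open scoped Classical

section UpAux

variable {Agt AP : Type}

lemma eval_bigOr (v : AP → Prop) (w : FormCAB Agt AP → Prop) :
    ∀ (l : List (FormCAB Agt AP)),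
      evalCAB v w (bigOrCAB l) ↔ ∃ x ∈ l, evalCAB v w x
  | [] => by simp [bigOrCAB, evalCAB]
  | a :: l => by simp [bigOrCAB, evalCAB, eval_bigOr v w l]

lemma der_mono {φ ψ : FormCAB Agt AP} (h : DerCAB φ)
    (himp : ∀ v w, evalCAB v w φ → evalCAB v w ψ) : DerCAB ψ :=
  DerCAB.r1 [φ] ψ (by simpa using h)
    (fun v w h' => himp v w (h' φ (by simp)))

lemma der_two {φ1 φ2 ψ : FormCAB Agt AP} (h1 : DerCAB φ1) (h2 : DerCAB φ2)
    (himp : ∀ v w, evalCAB v w φ1 → evalCAB v w φ2 → evalCAB v w ψ) : DerCAB ψ :=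
  DerCAB.r1 [φ1, φ2] ψ
    (by intro χ hχ; simp at hχ; rcases hχ with h | h <;> subst h <;> assumption)
    (fun v w h' => himp v w (h' φ1 (by simp)) (h' φ2 (by simp)))

lemma der_split (A : Set Agt) :
    ∀ (l : List (FormCAB Agt AP)) (φ0 : FormCAB Agt AP),
      DerCAB (FormCAB.or φ0 (bigOrCAB l)) →
      DerCAB (FormCAB.or (FormCAB.cdia A ∅ φ0 FormCAB.top)
        (bigOrCAB (l.map fun θ => FormCAB.cdia Set.univ ∅ θ FormCAB.top)))
  | [], φ0, h => by
      have h1 : DerCAB φ0 := der_mono h (by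
        intro v w hv
        simpa [evalCAB, bigOrCAB] using hv)
      exact der_mono (DerCAB.r2 A φ0 h1)
        (by intro v w hv; simp [evalCAB, bigOrCAB]; exact hv)
  | θ :: l, φ0, h => by
      have h1 : DerCAB (FormCAB.or (FormCAB.or φ0 θ) (bigOrCAB l)) :=
        der_mono h (by intro v w hv; simp [evalCAB, bigOrCAB] at hv ⊢; tauto)
      have h2 := der_split A l (FormCAB.or φ0 θ) h1
      have h3 := DerCAB.r3 A φ0 θ
        (bigOrCAB (l.map fun θ => FormCAB.cdia Set.univ ∅ θ FormCAB.top)) h2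
      exact h3

/-- One expansion step, downward: eliminate the disjunct for `j'` via R5. -/
lemma der_step {ι : Type} [DecidableEq ι]
    (A B : ι → Set Agt) (φ ψ : ι → FormCAB Agt AP)
    (S : Finset ι) (j' : ι)
    (hAB : A j' ∪ B j' = Set.univ)
    (D : FormCAB Agt AP)
    (hDj : ∀ (v : AP → Prop) (w : FormCAB Agt AP → Prop),
      w (FormCAB.cdia (A j') (B j') (φ j') (ψ j')) → evalCAB v w D)
    (hexp : DerCAB (FormCAB.or
      (bigOrCAB (S.toList.map fun j => FormCAB.and (φ j) (ψ j))) (φ j')))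
    (hprev : DerCAB (FormCAB.or
      (bigOrCAB ((insert j' S).toList.map fun j =>
        FormCAB.cdia Set.univ ∅ (FormCAB.and (φ j) (ψ j)) FormCAB.top)) D)) :
    DerCAB (FormCAB.or
      (bigOrCAB (S.toList.map fun j =>
        FormCAB.cdia Set.univ ∅ (FormCAB.and (φ j) (ψ j)) FormCAB.top)) D) := by
  have haux0 : DerCAB (FormCAB.or (φ j')
      (bigOrCAB (S.toList.map fun j => FormCAB.and (φ j) (ψ j)))) :=
    der_mono hexp (by intro v w hv; simp [evalCAB] at hv ⊢; tauto)
  have haux := der_split (∅ : Set Agt) _ _ haux0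
  have hprev' : DerCAB (FormCAB.or
      (FormCAB.cdia (A j' ∪ B j') ∅ (FormCAB.and (φ j') (ψ j')) FormCAB.top)
      (FormCAB.or (bigOrCAB (S.toList.map fun j =>
        FormCAB.cdia Set.univ ∅ (FormCAB.and (φ j) (ψ j)) FormCAB.top)) D)) := by
    rw [hAB]
    refine der_mono hprev ?_
    intro v w hv
    simp [evalCAB, eval_bigOr, List.mem_map, Finset.mem_toList,
      Finset.mem_insert] at hv ⊢
    aesop
  have hcomb : DerCAB (FormCAB.or
      (FormCAB.and
        (FormCAB.cdia (A j' ∪ B j') ∅ (FormCAB.and (φ j') (ψ j')) FormCAB.top)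
        (FormCAB.cdia ∅ ∅ (φ j') FormCAB.top))
      (FormCAB.or (bigOrCAB (S.toList.map fun j =>
        FormCAB.cdia Set.univ ∅ (FormCAB.and (φ j) (ψ j)) FormCAB.top)) D)) := by
    refine der_two hprev' haux ?_
    intro v w h1 h2
    simp [evalCAB, eval_bigOr, List.mem_map, Finset.mem_toList] at h1 h2 ⊢
    aesop
  have h5 := DerCAB.r5 (A j') (B j') (φ j') (ψ j') _ hcomb
  refine der_mono h5 ?_
  intro v w hv
  simp [evalCAB] at hv ⊢
  rcases hv with hv | hv
  · exact Or.inr (hDj v w hv)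
  · exact hv

/-- The top step: from derivability of the conjunction disjunction at level `L`. -/
lemma der_top {ι : Type} [DecidableEq ι]
    (A B : ι → Set Agt) (φ ψ : ι → FormCAB Agt AP)
    (S : Finset ι) (j' : ι) (hj' : j' ∉ S)
    (D : FormCAB Agt AP)
    (hDj : ∀ (v : AP → Prop) (w : FormCAB Agt AP → Prop),
      w (FormCAB.cdia (A j') (B j') (φ j') (ψ j')) → evalCAB v w D)
    (hexp : DerCAB (FormCAB.or
      (bigOrCAB (S.toList.map fun j => FormCAB.and (φ j) (ψ j))) (φ j')))
    (hTh : DerCAB (bigOrCAB ((insert j' S).toList.map fun j =>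
        FormCAB.and (φ j) (ψ j)))) :
    DerCAB (FormCAB.or
      (bigOrCAB (S.toList.map fun j =>
        FormCAB.cdia Set.univ ∅ (FormCAB.and (φ j) (ψ j)) FormCAB.top)) D) := by
  have hTh' : DerCAB (FormCAB.or (FormCAB.and (φ j') (ψ j'))
      (bigOrCAB (S.toList.map fun j => FormCAB.and (φ j) (ψ j)))) := by
    refine der_mono hTh ?_
    intro v w hv
    simp [evalCAB, eval_bigOr, List.mem_map, Finset.mem_toList,
      Finset.mem_insert] at hv ⊢
    aesop
  have h1 := der_split (A j' ∪ B j') _ _ hTh'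
  have haux0 : DerCAB (FormCAB.or (φ j')
      (bigOrCAB (S.toList.map fun j => FormCAB.and (φ j) (ψ j)))) :=
    der_mono hexp (by intro v w hv; simp [evalCAB] at hv ⊢; tauto)
  have haux := der_split (∅ : Set Agt) _ _ haux0
  have hcomb : DerCAB (FormCAB.or
      (FormCAB.and
        (FormCAB.cdia (A j' ∪ B j') ∅ (FormCAB.and (φ j') (ψ j')) FormCAB.top)
        (FormCAB.cdia ∅ ∅ (φ j') FormCAB.top))
      (FormCAB.or (bigOrCAB (S.toList.map fun j =>
        FormCAB.cdia Set.univ ∅ (FormCAB.and (φ j) (ψ j)) FormCAB.top)) D)) := by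
    refine der_two h1 haux ?_
    intro v w h1' h2'
    simp [evalCAB, eval_bigOr, List.mem_map, Finset.mem_toList] at h1' h2' ⊢
    aesop
  have h5 := DerCAB.r5 (A j') (B j') (φ j') (ψ j') _ hcomb
  refine der_mono h5 ?_
  intro v w hv
  simp [evalCAB] at hv ⊢
  rcases hv with hv | hv
  · exact Or.inr (hDj v w hv)
  · exact hv

/-- Final conversion via R4: every index in the list has full coalition. -/
lemma der_finish {ι : Type}
    (A B : ι → Set Agt) (φ ψ : ι → FormCAB Agt AP) (D : FormCAB Agt AP) :
    ∀ l : List ι, (∀ j ∈ l, A j = Set.univ) →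
    (∀ j ∈ l, ∀ (v : AP → Prop) (w : FormCAB Agt AP → Prop),
      w (FormCAB.cdia (A j) (B j) (φ j) (ψ j)) → evalCAB v w D) →
    DerCAB (FormCAB.or (bigOrCAB (l.map fun j =>
      FormCAB.cdia Set.univ ∅ (FormCAB.and (φ j) (ψ j)) FormCAB.top)) D) →
    DerCAB D
  | [], _, _, h => der_mono h (by
      intro v w hv
      simpa [evalCAB, bigOrCAB] using hv)
  | j :: l, hA, hD, h => by
      have h1 : DerCAB (FormCAB.or
          (FormCAB.cdia (A j) ∅ (FormCAB.and (φ j) (ψ j)) FormCAB.top)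
          (FormCAB.or (bigOrCAB (l.map fun j =>
            FormCAB.cdia Set.univ ∅ (FormCAB.and (φ j) (ψ j)) FormCAB.top)) D)) := by
        rw [hA j (by simp)]
        refine der_mono h ?_
        intro v w hv
        simp [evalCAB, bigOrCAB] at hv ⊢
        tauto
      have h2 := DerCAB.r4 (A j) (B j) (φ j) (ψ j) _ h1
      refine der_finish A B φ ψ D l (fun i hi => hA i (by simp [hi]))
        (fun i hi => hD i (by simp [hi])) ?_
      refine der_mono h2 ?_
      intro v w hv
      simp [evalCAB] at hv ⊢
      rcases hv with hv | hv
      · exact Or.inr (hD j (by simp) v w hv)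
      · exact hv

end UpAux

/-- Upward derivability for CCSR_AB: if γ is derivable, or there exists a
syntactically well-arranged sequence (P k)_{0 ≤ k ≤ L} of subsets of PI, then the
standard disjunction γ ∨ ⋁_{j∈PI}⟨A_j⟩φ_j⟨B_j⟩_c ψ_j is derivable. -/
theorem upward_derivability_CCSR_AB
    {Agt AP : Type} [Fintype Agt] [Nonempty Agt] [Countable AP]
    {ι : Type} [DecidableEq ι]
    (γ : FormCAB Agt AP) (hγ : IsElemDisjCAB γ)
    (PI : Finset ι) (A B : ι → Set Agt) (φ ψ : ι → FormCAB Agt AP)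
    (h : DerCAB γ ∨
      ∃ (L : ℕ) (P : ℕ → Finset ι),
        (∀ k ≤ L, P k ⊆ PI) ∧
        P 0 = (PI.filter fun j => A j = Set.univ) ∧
        (∀ k < L, (PI.filter fun j => A j = Set.univ) ⊆ P k ∧
          P k ⊆ (PI.filter fun j => A j ∪ B j = Set.univ)) ∧
        (∀ k < L, ∃ j' ∈ PI \ P k,
          DerCAB (FormCAB.or
            (bigOrCAB ((P k).toList.map fun j => FormCAB.and (φ j) (ψ j)))
            (φ j')) ∧
          P (k + 1) = insert j' (P k)) ∧
        DerCAB (bigOrCAB ((P L).toList.map fun j => FormCAB.and (φ j) (ψ j)))) :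
    DerCAB (FormCAB.or γ
      (bigOrCAB (PI.toList.map fun j => FormCAB.cdia (A j) (B j) (φ j) (ψ j)))) := by
  rcases h with hγ' | ⟨L, P, hsub, hP0, hmid, hexp, hL⟩
  · exact der_mono hγ' (by intro v w hv; simp [evalCAB]; exact Or.inl hv)
  · -- notation for the big modal disjunction
    set D : FormCAB Agt AP :=
      bigOrCAB (PI.toList.map fun j => FormCAB.cdia (A j) (B j) (φ j) (ψ j))
      with hDdef
    have hDj : ∀ j ∈ PI, ∀ (v : AP → Prop) (w : FormCAB Agt AP → Prop),
        w (FormCAB.cdia (A j) (B j) (φ j) (ψ j)) → evalCAB v w D := by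
      intro j hj v w hw
      rw [hDdef]
      simp [eval_bigOr, List.mem_map, Finset.mem_toList, evalCAB]
      exact ⟨j, hj, hw⟩
    suffices hD : DerCAB D by
      exact der_mono hD (by intro v w hv; simp [evalCAB]; exact Or.inr hv)
    -- the claim at stage 0
    have hQ0 : DerCAB (FormCAB.or (bigOrCAB ((P 0).toList.map fun j =>
        FormCAB.cdia Set.univ ∅ (FormCAB.and (φ j) (ψ j)) FormCAB.top)) D) := by
      rcases Nat.eq_zero_or_pos L with hL0 | hLpos
      · -- L = 0 : split the derivable disjunction directly
        subst hL0
        cases hlist : (P 0).toList with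
        | nil =>
          rw [hlist] at hL
          exact der_mono hL (by intro v w hv; simp [bigOrCAB, evalCAB] at hv)
        | cons j l =>
          rw [hlist] at hL
          have hL' : DerCAB (FormCAB.or (FormCAB.and (φ j) (ψ j))
              (bigOrCAB (l.map fun j => FormCAB.and (φ j) (ψ j)))) := hL
          have := der_split (Set.univ : Set Agt) _ _ hL'
          refine der_mono this ?_
          intro v w hv
          simp [evalCAB, eval_bigOr, List.mem_map, bigOrCAB, hlist] at hv ⊢
          aesop
      · -- L ≥ 1 : top step followed by downward induction
        obtain ⟨j', hj'mem, hder2, hPk1⟩ := hexp (L - 1) (by omega)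
        rw [Finset.mem_sdiff] at hj'mem
        have hL' : L - 1 + 1 = L := by omega
        rw [hL'] at hPk1
        rw [hPk1] at hL
        have hQtop : DerCAB (FormCAB.or (bigOrCAB ((P (L - 1)).toList.map fun j =>
            FormCAB.cdia Set.univ ∅ (FormCAB.and (φ j) (ψ j)) FormCAB.top)) D) :=
          der_top A B φ ψ (P (L - 1)) j' hj'mem.2 D (hDj j' hj'mem.1) hder2 hL
        have hdown : ∀ n, n ≤ L - 1 →
            DerCAB (FormCAB.or (bigOrCAB ((P (L - 1 - n)).toList.map fun j =>
              FormCAB.cdia Set.univ ∅ (FormCAB.and (φ j) (ψ j)) FormCAB.top)) D) := by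
          intro n
          induction n with
          | zero => intro _; simpa using hQtop
          | succ n ih =>
            intro hn
            have hprev := ih (by omega)
            have hk : L - 1 - (n + 1) + 1 = L - 1 - n := by omega
            have hklt : L - 1 - (n + 1) + 1 < L := by omega
            obtain ⟨j'', hmem2, hd2, hP2⟩ := hexp (L - 1 - (n + 1)) (by omega)
            rw [Finset.mem_sdiff] at hmem2
            have hABj : A j'' ∪ B j'' = Set.univ := by
              have hin : j'' ∈ P (L - 1 - (n + 1) + 1) := by
                rw [hP2]; exact Finset.mem_insert_self _ _
              have := (hmid (L - 1 - (n + 1) + 1) hklt).2 hin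
              exact (Finset.mem_filter.mp this).2
            rw [hk] at hP2
            rw [hP2] at hprev
            exact der_step A B φ ψ (P (L - 1 - (n + 1))) j'' hABj D
              (hDj j'' hmem2.1) hd2 hprev
        have := hdown (L - 1) le_rfl
        have h00 : L - 1 - (L - 1) = 0 := by omega
        rwa [h00] at this
    -- finish with R4 over P 0 (all full coalitions)
    have hP0mem : ∀ j ∈ (P 0).toList, A j = Set.univ := by
      intro j hj
      rw [Finset.mem_toList, hP0, Finset.mem_filter] at hj
      exact hj.2
    have hP0PI : ∀ j ∈ (P 0).toList, j ∈ PI := by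
      intro j hj
      rw [Finset.mem_toList] at hj
      exact hsub 0 (Nat.zero_le _) hj
    exact der_finish A B φ ψ D (P 0).toList hP0mem
      (fun j hj => hDj j (hP0PI j hj)) hQ0
end
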